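/- arXiv:1909.11910 — 9 statements merged into one kernel-verified Lean document; each statement's English description precedes it below -/
import Mathlib

section
/- Let N ≥ 1 and let F : [0,∞)^N → [0,∞) be a metric preserving function. Then for all (s_1,…,s_N), (s'_1,…,s'_N) ∈ [0,∞)^N one has |F(s_1,…,s_N) − F(s'_1,…,s'_N)| ≤ F(|s_1−s'_1|,…,|s_N−s'_N|). -/
open MeasureTheory Filter Topology NNReal ENNReal TopologicalSpace

noncomputable section

/-- A function `F : [0,∞)^N → [0,∞)` is metric preserving if for any `N` metric
spaces `X i`, the function `dF x y = F (fun i => dist (x i) (y i))` is a metric on `∀ i, X i`. -/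
def IsMetricPreservingN (N : ℕ) (F : (Fin N → ℝ≥0) → ℝ≥0) : Prop :=
  ∀ (X : Fin N → Type) [∀ i, MetricSpace (X i)],
    (∀ x y : (i : Fin N) → X i, (F (fun i => nndist (x i) (y i)) = 0 ↔ x = y)) ∧
    (∀ x y : (i : Fin N) → X i,
      F (fun i => nndist (x i) (y i)) = F (fun i => nndist (y i) (x i))) ∧
    (∀ x y z : (i : Fin N) → X i,
      F (fun i => nndist (x i) (z i)) ≤
        F (fun i => nndist (x i) (y i)) + F (fun i => nndist (y i) (z i)))

/-- A function `F : [0,∞)² → [0,∞)` is metric preserving if for any two metric spaces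
`X`, `Y`, the function `dF p q = F (dist p.1 q.1) (dist p.2 q.2)` is a metric on `X × Y`. -/
def IsMetricPreserving2 (F : ℝ≥0 → ℝ≥0 → ℝ≥0) : Prop :=
  ∀ (X Y : Type) [MetricSpace X] [MetricSpace Y],
    (∀ p q : X × Y, (F (nndist p.1 q.1) (nndist p.2 q.2) = 0 ↔ p = q)) ∧
    (∀ p q : X × Y,
      F (nndist p.1 q.1) (nndist p.2 q.2) = F (nndist q.1 p.1) (nndist q.2 p.2)) ∧
    (∀ p q r : X × Y,
      F (nndist p.1 r.1) (nndist p.2 r.2) ≤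
        F (nndist p.1 q.1) (nndist p.2 q.2) + F (nndist q.1 r.1) (nndist q.2 r.2))

/-- A function `f : [0,∞) → [0,∞)` is metric preserving if for any metric space `X`,
`f ∘ dist` is a metric on `X`. -/
def IsMetricPreserving1 (f : ℝ≥0 → ℝ≥0) : Prop :=
  ∀ (X : Type) [MetricSpace X],
    (∀ x y : X, (f (nndist x y) = 0 ↔ x = y)) ∧
    (∀ x y : X, f (nndist x y) = f (nndist y x)) ∧
    (∀ x y z : X, f (nndist x z) ≤ f (nndist x y) + f (nndist y z))

/-- Diameter of a set with respect to an explicitly given distance function. -/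
def diamD {α : Type*} (d : α → α → ℝ) (A : Set α) : ℝ≥0∞ :=
  ⨆ (x : α) (_ : x ∈ A) (y : α) (_ : y ∈ A), ENNReal.ofReal (d x y)

/-- Partial diameter `diam(μ; a)`: the infimum of diameters of Borel sets of measure at
least `a`, with respect to an explicitly given distance function. -/
def partialDiamD {α : Type*} [MeasurableSpace α] (d : α → α → ℝ) (μ : Measure α) (a : ℝ) :
    ℝ≥0∞ :=
  ⨅ (A : Set α) (_ : MeasurableSet A ∧ ENNReal.ofReal a ≤ μ A), diamD d A

/-- Observable diameter `ObsDiam((α,d,μ); -κ)` with respect to an explicitly given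
distance function `d`. -/
def obsDiamD {α : Type*} [MeasurableSpace α] (d : α → α → ℝ) (μ : Measure α) (κ : ℝ) :
    ℝ≥0∞ :=
  ⨆ (f : α → ℝ) (_ : Measurable f ∧ ∀ x y, |f x - f y| ≤ d x y),
    partialDiamD (fun a b : ℝ => dist a b) (μ.map f) (1 - κ)

/-- Concentration function `α_{(α,d,μ)}(r)` with respect to an explicitly given distance
function `d`. -/
def concFnD {α : Type*} [MeasurableSpace α] (d : α → α → ℝ) (μ : Measure α) (r : ℝ) :
    ℝ≥0∞ :=
  ⨆ (A : Set α) (_ : MeasurableSet A ∧ ENNReal.ofReal (1 / 2) ≤ μ A),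
    1 - μ {x | ∃ a ∈ A, d x a < r}

/-- The λ-Prokhorov distance between Borel probability measures, with respect to an
explicitly given distance function `d` (so that `U_ε(A) = {x | ∃ a ∈ A, d x a < ε}`). -/
def prokDistD {α : Type*} [MeasurableSpace α] (d : α → α → ℝ) (lam : ℝ)
    (μ ν : Measure α) : ℝ :=
  sInf {ε : ℝ | 0 < ε ∧ ∀ A : Set α, MeasurableSet A →
    ν A ≤ μ {x | ∃ a ∈ A, d x a < ε} + ENNReal.ofReal (lam * ε)}

/-- The box distance between `(α, dα, μ)` and `(β, dβ, ν)`, with explicitly given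
distance functions. A parameter of `(α, μ)` is a measurable map `φ : [0,1) → α`
pushing the Lebesgue measure forward to `μ`. -/
def boxDistD {α β : Type*} [MeasurableSpace α] [MeasurableSpace β]
    (dα : α → α → ℝ) (dβ : β → β → ℝ) (μ : Measure α) (ν : Measure β) : ℝ :=
  sInf {ε : ℝ | 0 ≤ ε ∧ ∃ (φ : ℝ → α) (ψ : ℝ → β), Measurable φ ∧ Measurable ψ ∧
    (volume.restrict (Set.Ico (0 : ℝ) 1)).map φ = μ ∧
    (volume.restrict (Set.Ico (0 : ℝ) 1)).map ψ = ν ∧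
    ∃ I₀ : Set ℝ, I₀ ⊆ Set.Ico (0 : ℝ) 1 ∧ MeasurableSet I₀ ∧
      ENNReal.ofReal (1 - ε) ≤ volume I₀ ∧
      ∀ s ∈ I₀, ∀ t ∈ I₀, |dα (φ s) (φ t) - dβ (ψ s) (ψ t)| ≤ ε}

/-- The value `F_p^N(s_1, …, s_N)`: the `l_p` combination of nonnegative reals. -/
def lpVal (p : ℝ≥0∞) {N : ℕ} (s : Fin N → ℝ≥0) : ℝ≥0 :=
  if p = ∞ then Finset.univ.sup s else (∑ i, s i ^ p.toReal) ^ (1 / p.toReal)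

/-- Distance between two sets with respect to an explicitly given distance function. -/
def setDistD {α β : Type*} (d : α → β → ℝ) (A : Set α) (B : Set β) : ℝ :=
  sInf (Set.image2 d A B)

end

/-- For a metric preserving function `F : [0,∞)^N → [0,∞)` (`N ≥ 1`),
`|F s - F s'| ≤ F (fun i => |s i - s' i|)`. -/
theorem metricPreserving_abs_sub_le (N : ℕ) (hN : 1 ≤ N)
    (F : (Fin N → ℝ≥0) → ℝ≥0) (hF : IsMetricPreservingN N F)
    (s s' : Fin N → ℝ≥0) :
    |(F s : ℝ) - (F s' : ℝ)| ≤
      (F (fun i => Real.nnabs ((s i : ℝ) - (s' i : ℝ))) : ℝ) := by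
  obtain ⟨-, hsymm, htri⟩ := hF (fun _ => ℝ≥0)
  have hd : ∀ a b : ℝ≥0, nndist a b = Real.nnabs ((a:ℝ) - b) := by
    intro a b; ext; simp [coe_nndist, NNReal.dist_eq, Real.coe_nnabs]
  have h0 : ∀ a : ℝ≥0, nndist (0:ℝ≥0) a = a := by
    intro a; ext; simp [coe_nndist, NNReal.dist_eq]
  have hab : (fun i => Real.nnabs ((s' i : ℝ) - (s i : ℝ)))
      = fun i => Real.nnabs ((s i : ℝ) - (s' i : ℝ)) := by
    funext i; ext; simp [Real.coe_nnabs, abs_sub_comm]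
  have h1 : F s ≤ F s' + F (fun i => Real.nnabs ((s i : ℝ) - (s' i : ℝ))) := by
    have := htri (fun _ => 0) s' s
    simpa [h0, hd, hab] using this
  have h2 : F s' ≤ F s + F (fun i => Real.nnabs ((s i : ℝ) - (s' i : ℝ))) := by
    have := htri (fun _ => 0) s s'
    have hsw : F (fun i => nndist (s i) (s' i)) = F (fun i => nndist (s' i) (s i)) :=
      hsymm s s'
    simp only [hd] at hsw
    simpa [h0, hd, hab, ← hsw] using this
  rw [abs_sub_le_iff]
  constructor <;>
    · rw [sub_le_iff_le_add, add_comm]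
      first
        | exact_mod_cast h1
        | exact_mod_cast h2
end

section
/- Let N ≥ 1 and let F : [0,∞)^N → [0,∞) be a metric preserving function. Then for all (s_1,…,s_N), (s'_1,…,s'_N) ∈ [0,∞)^N such that s_i ≤ 2 s'_i for every i, one has F(s_1,…,s_N) ≤ 2 F(s'_1,…,s'_N). -/
open MeasureTheory Filter Topology NNReal ENNReal TopologicalSpace

noncomputable section TriAux

noncomputable section

def triDist (a b : ℝ≥0) : Fin 3 → Fin 3 → ℝ := fun i j =>
  if i = j then 0
  else if (i = 0 ∧ j = 2) ∨ (i = 2 ∧ j = 0) then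
    (if a = 0 then (if b = 0 then 1 else (b : ℝ)) else (a : ℝ))
  else (if b = 0 then 1 else (b : ℝ))

def triMS (a b : ℝ≥0) (hab : a ≤ 2 * b) : MetricSpace (Fin 3) where
  dist := triDist a b
  dist_self i := by simp [triDist]
  dist_comm i j := by
    fin_cases i <;> fin_cases j <;> simp [triDist]
  dist_triangle i j k := by
    have hb' : (0:ℝ) < (if b = 0 then 1 else (b:ℝ)) := by
      split <;> [norm_num; positivity]
    have hc02pos : (0:ℝ) < (if a = 0 then (if b = 0 then 1 else (b : ℝ)) else (a : ℝ)) := by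
      split
      · exact hb'
      · positivity
    have hc02le : (if a = 0 then (if b = 0 then 1 else (b : ℝ)) else (a : ℝ)) ≤
        2 * (if b = 0 then 1 else (b:ℝ)) := by
      by_cases ha : a = 0
      · rw [if_pos ha]; linarith
      · have hb : b ≠ 0 := by
          rintro rfl
          exact ha (le_antisymm (by simpa using hab) zero_le)
        rw [if_neg ha, if_neg hb]
        exact_mod_cast hab
    fin_cases i <;> fin_cases j <;> fin_cases k <;> simp [triDist] <;> linarith
  eq_of_dist_eq_zero := by
    have hb' : (0:ℝ) < (if b = 0 then 1 else (b:ℝ)) := by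
      split <;> [norm_num; positivity]
    have hc02pos : (0:ℝ) < (if a = 0 then (if b = 0 then 1 else (b : ℝ)) else (a : ℝ)) := by
      split
      · exact hb'
      · positivity
    intro i j hij
    fin_cases i <;> fin_cases j <;> simp_all [triDist] <;> linarith

end

lemma tri_nndist_xz (a b : ℝ≥0) (hab : a ≤ 2 * b) :
    @nndist (Fin 3) (triMS a b hab).toPseudoMetricSpace.toNNDist 0 (if a = 0 then 0 else 2) = a := by
  letI := triMS a b hab
  apply NNReal.coe_injective
  rw [coe_nndist]
  show triDist a b 0 (if a = 0 then 0 else 2) = a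
  by_cases ha : a = 0 <;> simp [ha, triDist]

lemma tri_nndist_xy (a b : ℝ≥0) (hab : a ≤ 2 * b) :
    @nndist (Fin 3) (triMS a b hab).toPseudoMetricSpace.toNNDist 0 (if b = 0 then 0 else 1) = b := by
  letI := triMS a b hab
  apply NNReal.coe_injective
  rw [coe_nndist]
  show triDist a b 0 (if b = 0 then 0 else 1) = b
  by_cases hb : b = 0 <;> simp [hb, triDist]

lemma tri_nndist_yz (a b : ℝ≥0) (hab : a ≤ 2 * b) :
    @nndist (Fin 3) (triMS a b hab).toPseudoMetricSpace.toNNDist (if b = 0 then 0 else 1)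
      (if a = 0 then 0 else 2) = b := by
  letI := triMS a b hab
  apply NNReal.coe_injective
  rw [coe_nndist]
  show triDist a b (if b = 0 then 0 else 1) (if a = 0 then 0 else 2) = b
  by_cases hb : b = 0
  · have ha : a = 0 := le_antisymm (by simpa [hb] using hab) zero_le
    simp [ha, hb, triDist]
  · by_cases ha : a = 0 <;> simp [ha, hb, triDist]


end TriAux

/-- For a metric preserving function `F : [0,∞)^N → [0,∞)` (`N ≥ 1`),
if `s i ≤ 2 * s' i` for every `i`, then `F s ≤ 2 * F s'`. -/
theorem metricPreserving_le_two_mul (N : ℕ) (hN : 1 ≤ N)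
    (F : (Fin N → ℝ≥0) → ℝ≥0) (hF : IsMetricPreservingN N F)
    (s s' : Fin N → ℝ≥0) (h : ∀ i, s i ≤ 2 * s' i) :
    F s ≤ 2 * F s' := by
  obtain ⟨-, -, htri⟩ := @hF (fun _ => Fin 3) (fun i => triMS (s i) (s' i) (h i))
  have key := htri (fun _ => 0) (fun i => if s' i = 0 then 0 else 1)
    (fun i => if s i = 0 then 0 else 2)
  have e1 : (fun i => @nndist (Fin 3) (triMS (s i) (s' i) (h i)).toPseudoMetricSpace.toNNDist
      ((fun _ => (0 : Fin 3)) i) ((fun i => if s i = 0 then (0 : Fin 3) else 2) i)) = s :=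
    funext fun i => tri_nndist_xz (s i) (s' i) (h i)
  have e2 : (fun i => @nndist (Fin 3) (triMS (s i) (s' i) (h i)).toPseudoMetricSpace.toNNDist
      ((fun _ => (0 : Fin 3)) i) ((fun i => if s' i = 0 then (0 : Fin 3) else 1) i)) = s' :=
    funext fun i => tri_nndist_xy (s i) (s' i) (h i)
  have e3 : (fun i => @nndist (Fin 3) (triMS (s i) (s' i) (h i)).toPseudoMetricSpace.toNNDist
      ((fun i => if s' i = 0 then (0 : Fin 3) else 1) i)
      ((fun i => if s i = 0 then (0 : Fin 3) else 2) i)) = s' :=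
    funext fun i => tri_nndist_yz (s i) (s' i) (h i)
  rw [e1, e2, e3] at key
  calc F s ≤ F s' + F s' := key
    _ = 2 * F s' := (two_mul _).symm
end

section
/- Let F : [0,∞)^N → [0,∞) be a continuous metric preserving function. If X_1, …, X_N are complete metric spaces, then the metric space (X_1 × ⋯ × X_N, d_F), where d_F((x_i)_{i=1}^N, (x'_i)_{i=1}^N) := F(d_{X_1}(x_1, x'_1), …, d_{X_N}(x_N, x'_N)), is complete. -/
open MeasureTheory Filter Topology NNReal ENNReal TopologicalSpace

lemma prod_nndist_eq {α β : Type*} [PseudoMetricSpace α] [PseudoMetricSpace β]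
    (p q : α × β) : nndist p q = max (nndist p.1 q.1) (nndist p.2 q.2) := by
  apply NNReal.coe_injective
  push_cast [coe_nndist]
  exact Prod.dist_eq


/-- If `F : [0,∞)^N → [0,∞)` is a continuous metric preserving function and
the metric spaces `X i` are complete, then the product `(∀ i, X i, d_F)` is complete:
every `d_F`-Cauchy sequence converges with respect to `d_F`. -/
theorem metricPreserving_product_complete (N : ℕ)
    (F : (Fin N → ℝ≥0) → ℝ≥0) (hF : IsMetricPreservingN N F) (hFc : Continuous F)
    (X : Fin N → Type) [∀ i, MetricSpace (X i)] [∀ i, CompleteSpace (X i)]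
    (x : ℕ → (i : Fin N) → X i)
    (hx : ∀ ε : ℝ≥0, 0 < ε → ∃ K, ∀ m ≥ K, ∀ n ≥ K,
      F (fun i => nndist (x m i) (x n i)) < ε) :
    ∃ l : (i : Fin N) → X i,
      Tendsto (fun n => F (fun i => nndist (x n i) (l i))) atTop (nhds 0) := by
  have hF0 : F 0 = 0 := by
    obtain ⟨h1, -, -⟩ := hF X
    have h := (h1 (x 0) (x 0)).2 rfl
    have he : (fun i => nndist (x 0 i) (x 0 i)) = 0 := by funext i; simp
    rwa [he] at h
  have key : ∀ i, CauchySeq (fun n => x n i) := by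
    intro i
    rw [Metric.cauchySeq_iff]
    intro ε hε
    set ε' : ℝ≥0 := ⟨ε, hε.le⟩ with hε'def
    have hε'pos : 0 < ε' := hε
    set e : Fin N → ℝ≥0 := fun j => if j = i then ε' else 0 with he
    have hpos : 0 < F e := by
      obtain ⟨h1, -, -⟩ := hF (fun _ => ℝ≥0)
      have hvec : (fun j => nndist ((0 : Fin N → ℝ≥0) j) (e j)) = e := by
        funext j; simp
      have hne : (0 : Fin N → ℝ≥0) ≠ e := by
        intro h
        have := congrFun h i
        simp [e] at this
        exact hε'pos.ne this
      have := (h1 0 e).not.2 (by simpa using hne) -- F hvec ≠ 0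
      rw [hvec] at this
      exact zero_lt_iff.mpr this
    obtain ⟨K, hK⟩ := hx (F e / 2) (half_pos hpos)
    refine ⟨K, fun m hm n hn => ?_⟩
    by_contra hcon
    push_neg at hcon
    -- ε ≤ dist (x m i) (x n i)
    have hcon' : ε' ≤ nndist (x m i) (x n i) := by
      rw [← NNReal.coe_le_coe, coe_nndist]; exact hcon
    obtain ⟨-, h2, h3⟩ := hF (fun _ => ℝ≥0 × ℝ≥0)
    set v : Fin N → ℝ≥0 := fun j => nndist (x m j) (x n j) with hv
    set a : (j : Fin N) → ℝ≥0 × ℝ≥0 := fun _ => (0, 0) with ha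
    set b : (j : Fin N) → ℝ≥0 × ℝ≥0 := fun j => (v j, 0) with hb
    set c : (j : Fin N) → ℝ≥0 × ℝ≥0 := fun j => if j = i then (v j, ε') else (v j, 0)
      with hc
    have hab : (fun j => nndist (a j) (b j)) = v := by
      funext j; simp [a, b, prod_nndist_eq]
    have hac : (fun j => nndist (a j) (c j)) = v := by
      funext j
      by_cases hj : j = i
      · subst hj
        simp only [c, if_pos rfl, a, prod_nndist_eq]
        simp [max_eq_left (hcon'.trans_eq rfl)]
        exact hcon'
      · simp [a, c, hj, prod_nndist_eq]
    have hbc : (fun j => nndist (b j) (c j)) = e := by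
      funext j
      by_cases hj : j = i
      · subst hj; simp [b, c, e, prod_nndist_eq]
      · simp [b, c, e, hj, prod_nndist_eq]
    have htri := h3 b a c
    rw [hbc, h2 b a, hab, hac] at htri
    have hFv : F v < F e / 2 := hK m hm n hn
    have : F e < F e := lt_of_le_of_lt htri (by
      calc F v + F v < F e / 2 + F e / 2 := by
            exact add_lt_add hFv hFv
        _ = F e := by exact add_halves _)
    exact lt_irrefl _ this
  have hlim : ∀ i, ∃ li : X i, Tendsto (fun n => x n i) atTop (𝓝 li) :=
    fun i => cauchySeq_tendsto_of_complete (key i)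
  choose l hl using hlim
  refine ⟨l, ?_⟩
  have hg : Tendsto (fun n => fun i => nndist (x n i) (l i)) atTop (𝓝 0) := by
    rw [tendsto_pi_nhds]
    intro i
    have : Tendsto (fun n => nndist (x n i) (l i)) atTop (𝓝 (nndist (l i) (l i))) :=
      ((continuous_nndist.comp ((continuous_id.prodMk continuous_const))).tendsto (l i)).comp (hl i)
    simpa using this
  have := (hFc.tendsto 0).comp hg
  rwa [hF0] at this
end

section
/- Let F_n : [0,∞)² → [0,∞), n = 1, 2, …, and F : [0,∞)² → [0,∞) be metric preserving functions. If F is continuous and F_n converges pointwise to F, then F_n converges to F uniformly on every compact subset of [0,∞)². -/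
open MeasureTheory Filter Topology NNReal ENNReal TopologicalSpace

section MPHelpers

private lemma mph_nndist_prod_eq (p q : (ℝ≥0) × (ℝ≥0)) :
    nndist p q = max (nndist p.1 q.1) (nndist p.2 q.2) := by
  have := Prod.dist_eq (x := p) (y := q)
  ext; simp [← dist_nndist, this]

private lemma mph_nndist_of_le {a b : ℝ≥0} (h : a ≤ b) : nndist a b = b - a := by
  ext; rw [← dist_nndist, NNReal.dist_eq]
  simp [NNReal.coe_sub h, abs_of_nonpos, sub_nonpos.2 (NNReal.coe_le_coe.2 h)]

private lemma mph_zero {F} (hF : IsMetricPreserving2 F) : F 0 0 = 0 := by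
  have := ((hF ℝ ℝ).1 (0,0) (0,0)).2 rfl
  simpa using this

private lemma mph_tri {F} (hF : IsMetricPreserving2 F) (s t s' t' : ℝ≥0) :
    F s t ≤ F (nndist s s') (nndist t t') + F s' t' := by
  have := (hF ℝ≥0 ℝ≥0).2.2 (s, t) (s', t') (0, 0)
  simpa using this

private lemma mph_trip (a δ : ℝ≥0) (h : a ≤ 2*δ) :
    nndist ((0,0) : ℝ≥0×ℝ≥0) (a/2, δ) = δ ∧
    nndist ((a/2, δ) : ℝ≥0×ℝ≥0) (a, 0) = δ ∧
    nndist ((0,0):ℝ≥0×ℝ≥0) (a,0) = a := by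
  have h2 : a/2 ≤ δ := by
    rw [div_le_iff₀ (by norm_num)]; rwa [mul_comm] at h
  have hle : a/2 ≤ a := div_le_self zero_le one_le_two
  have hhalf : a - a/2 = a/2 := by
    ext; rw [NNReal.coe_sub hle]; push_cast; ring
  refine ⟨?_, ?_, ?_⟩
  · rw [mph_nndist_prod_eq]
    simp [nndist_comm, mph_nndist_of_le zero_le, h2]
  · rw [mph_nndist_prod_eq]
    show max (nndist (a/2) a) (nndist δ 0) = δ
    rw [mph_nndist_of_le hle, hhalf]
    simp [nndist_comm, mph_nndist_of_le zero_le, max_eq_right h2]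
  · rw [mph_nndist_prod_eq]
    simp [nndist_comm, mph_nndist_of_le zero_le]

private lemma mph_double {F} (hF : IsMetricPreserving2 F) {δ u v : ℝ≥0}
    (hu : u ≤ 2*δ) (hv : v ≤ 2*δ) : F u v ≤ F δ δ + F δ δ := by
  obtain ⟨h1u, h2u, h3u⟩ := mph_trip u δ hu
  obtain ⟨h1v, h2v, h3v⟩ := mph_trip v δ hv
  have := (hF (ℝ≥0×ℝ≥0) (ℝ≥0×ℝ≥0)).2.2
    (((0,0),(0,0)) : (ℝ≥0×ℝ≥0)×(ℝ≥0×ℝ≥0)) ((u/2,δ),(v/2,δ)) ((u,0),(v,0))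
  dsimp only at this
  rw [h1u, h2u, h3u, h1v, h2v, h3v] at this
  exact this

private lemma mph_dist_le (a b D : ℝ≥0) (h1 : a ≤ D + b) (h2 : b ≤ D + a) :
    dist a b ≤ (D:ℝ) := by
  have c1 := NNReal.coe_le_coe.2 h1
  have c2 := NNReal.coe_le_coe.2 h2
  push_cast at c1 c2
  rw [NNReal.dist_eq, abs_sub_le_iff]
  constructor <;> linarith

end MPHelpers

/-- If metric preserving functions `Fₙ` on `[0,∞)²` converge pointwise to a
continuous metric preserving function `F`, then the convergence is uniform on every
compact subset of `[0,∞)²`. -/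
theorem metricPreserving_tendstoUniformlyOn_of_pointwise
    (Fn : ℕ → ℝ≥0 → ℝ≥0 → ℝ≥0) (F : ℝ≥0 → ℝ≥0 → ℝ≥0)
    (hFn : ∀ n, IsMetricPreserving2 (Fn n)) (hF : IsMetricPreserving2 F)
    (hFc : Continuous fun p : ℝ≥0 × ℝ≥0 => F p.1 p.2)
    (hpt : ∀ s t : ℝ≥0, Tendsto (fun n => Fn n s t) atTop (nhds (F s t))) :
    ∀ K : Set (ℝ≥0 × ℝ≥0), IsCompact K →
      TendstoUniformlyOn (fun n p => Fn n p.1 p.2) (fun p => F p.1 p.2) atTop K := by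
  intro K hK
  rw [Metric.tendstoUniformlyOn_iff]
  intro ε hε
  set η : ℝ≥0 := (ε/8).toNNReal with hηdef
  have hηr : (η : ℝ) = ε/8 := Real.coe_toNNReal _ (by linarith)
  have hη : 0 < η := by
    rw [← NNReal.coe_lt_coe, hηr, NNReal.coe_zero]; linarith
  have hF0 : F 0 0 = 0 := mph_zero hF
  have hc : ContinuousAt (fun p : ℝ≥0 × ℝ≥0 => F p.1 p.2) (0,0) := hFc.continuousAt
  rw [Metric.continuousAt_iff] at hc
  obtain ⟨δ0, hδ0, hδ0'⟩ := hc (η:ℝ) (by rw [hηr]; linarith)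
  set δ : ℝ≥0 := (δ0/2).toNNReal with hδdef
  have hδr : (δ:ℝ) = δ0/2 := Real.coe_toNNReal _ (by linarith)
  have hδpos : (0:ℝ) < (δ:ℝ) := by rw [hδr]; linarith
  have hFδ : F δ δ < η := by
    have hdd : dist ((δ, δ) : ℝ≥0 × ℝ≥0) (0,0) < δ0 := by
      rw [Prod.dist_eq]
      have : dist δ (0:ℝ≥0) = (δ:ℝ) := by rw [NNReal.dist_eq]; simp
      simp only [this]
      rw [max_self, hδr]; linarith
    have h := hδ0' hdd
    simp only [hF0] at h
    rw [← NNReal.coe_lt_coe]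
    have : dist (F δ δ) (0:ℝ≥0) = ((F δ δ : ℝ≥0):ℝ) := by rw [NNReal.dist_eq]; simp
    rw [← this]; exact h
  obtain ⟨t, htK, htcov⟩ := hK.elim_nhds_subcover (fun c => Metric.ball c (δ:ℝ))
    (fun x _ => Metric.ball_mem_nhds x hδpos)
  have hA : ∀ᶠ n in atTop, Fn n δ δ < F δ δ + η :=
    (hpt δ δ).eventually_lt_const (lt_add_of_pos_right _ hη)
  have hB : ∀ᶠ n in atTop, ∀ c ∈ t, dist (Fn n c.1 c.2) (F c.1 c.2) < (η:ℝ) :=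
    (eventually_all_finset t).2 fun c _ =>
      Metric.tendsto_nhds.mp (hpt c.1 c.2) _ (by rw [hηr]; linarith)
  filter_upwards [hA, hB] with n hn1 hn2
  intro p hp
  obtain ⟨c, hct, hpc⟩ := Set.mem_iUnion₂.mp (htcov hp)
  have hd : dist p c < (δ:ℝ) := Metric.mem_ball.mp hpc
  have h1 : nndist p.1 c.1 ≤ 2*δ := by
    have h : dist p.1 c.1 < (δ:ℝ) :=
      lt_of_le_of_lt (by rw [Prod.dist_eq]; exact le_max_left _ _) hd
    rw [dist_nndist, NNReal.coe_lt_coe] at h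
    exact h.le.trans (le_mul_of_one_le_left zero_le one_le_two)
  have h2 : nndist p.2 c.2 ≤ 2*δ := by
    have h : dist p.2 c.2 < (δ:ℝ) :=
      lt_of_le_of_lt (by rw [Prod.dist_eq]; exact le_max_right _ _) hd
    rw [dist_nndist, NNReal.coe_lt_coe] at h
    exact h.le.trans (le_mul_of_one_le_left zero_le one_le_two)
  have bF : F (nndist p.1 c.1) (nndist p.2 c.2) ≤ F δ δ + F δ δ := mph_double hF h1 h2
  have bFn : Fn n (nndist p.1 c.1) (nndist p.2 c.2) ≤ Fn n δ δ + Fn n δ δ :=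
    mph_double (hFn n) h1 h2
  have dF : dist (F p.1 p.2) (F c.1 c.2) ≤ ((F δ δ + F δ δ : ℝ≥0):ℝ) := by
    refine mph_dist_le _ _ _ ((mph_tri hF p.1 p.2 c.1 c.2).trans (add_le_add_left bF _)) ?_
    have h := mph_tri hF c.1 c.2 p.1 p.2
    rw [nndist_comm c.1 p.1, nndist_comm c.2 p.2] at h
    exact h.trans (add_le_add_left bF _)
  have dFn : dist (Fn n p.1 p.2) (Fn n c.1 c.2) ≤ ((Fn n δ δ + Fn n δ δ : ℝ≥0):ℝ) := by
    refine mph_dist_le _ _ _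
      ((mph_tri (hFn n) p.1 p.2 c.1 c.2).trans (add_le_add_left bFn _)) ?_
    have h := mph_tri (hFn n) c.1 c.2 p.1 p.2
    rw [nndist_comm c.1 p.1, nndist_comm c.2 p.2] at h
    exact h.trans (add_le_add_left bFn _)
  have tri4 : dist (F p.1 p.2) (Fn n p.1 p.2) ≤
      dist (F p.1 p.2) (F c.1 c.2) + dist (F c.1 c.2) (Fn n c.1 c.2) +
        dist (Fn n c.1 c.2) (Fn n p.1 p.2) := dist_triangle4 _ _ _ _
  have e1 : ((F δ δ + F δ δ : ℝ≥0):ℝ) ≤ 2 * (η:ℝ) := by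
    push_cast
    have := NNReal.coe_le_coe.2 hFδ.le
    linarith
  have e2 : dist (F c.1 c.2) (Fn n c.1 c.2) < (η:ℝ) := by
    rw [dist_comm]; exact hn2 c hct
  have e3 : ((Fn n δ δ + Fn n δ δ : ℝ≥0):ℝ) ≤ 4 * (η:ℝ) := by
    push_cast
    have ha := NNReal.coe_le_coe.2 hn1.le
    have hb := NNReal.coe_le_coe.2 hFδ.le
    push_cast at ha
    linarith
  have e4 : dist (Fn n c.1 c.2) (Fn n p.1 p.2) ≤ 4 * (η:ℝ) := by
    rw [dist_comm] at dFn; linarith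
  calc dist (F p.1 p.2) (Fn n p.1 p.2) ≤ _ := tri4
  _ < 2*(η:ℝ) + (η:ℝ) + 4*(η:ℝ) := by linarith
  _ ≤ ε := by rw [hηr]; linarith
end

section
/- Let μ, μ' be Borel probability measures on a separable metric space X and let ν, ν' be Borel probability measures on a separable metric space Y. Let F : [0,∞)² → [0,∞) be a continuous metric preserving function and equip X × Y with the metric d_F((x,y),(x',y')) := F(d_X(x,x'), d_Y(y,y')). Then for any λ > 0, d_P^λ(μ ⊗ ν, μ' ⊗ ν') ≤ max { d_P^λ(μ, μ') + d_P^λ(ν, ν'), 2 F(d_P^λ(μ, μ'), d_P^λ(ν, ν')) }, where the λ-Prokhorov distance on the left-hand side is taken with respect to d_F. -/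
open MeasureTheory Filter Topology NNReal ENNReal TopologicalSpace

section AuxLemmas

/-- In `ℂ`, for `0 ≤ s ≤ 2ε` there is a point at distance `ε` from both `0` and `s`. -/
lemma exists_midpt_aux (s ε : ℝ) (hs : 0 ≤ s) (h : s ≤ 2 * ε) :
    ∃ y : ℂ, dist 0 y = ε ∧ dist y (s : ℂ) = ε := by
  have hε : 0 ≤ ε := by linarith
  have hle : (s / 2) ^ 2 ≤ ε ^ 2 := by nlinarith
  have hnn : 0 ≤ ε ^ 2 - (s / 2) ^ 2 := by linarith
  refine ⟨Complex.mk (s / 2) (Real.sqrt (ε ^ 2 - (s / 2) ^ 2)), ?_, ?_⟩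
  · have : (0 : ℂ) = Complex.mk 0 0 := rfl
    rw [this, Complex.dist_mk]
    rw [show (0 - s / 2) ^ 2 = (s / 2) ^ 2 by ring, show (0 - Real.sqrt (ε ^ 2 - (s / 2) ^ 2)) ^ 2
      = Real.sqrt (ε ^ 2 - (s / 2) ^ 2) ^ 2 by ring, Real.sq_sqrt hnn]
    rw [show (s / 2) ^ 2 + (ε ^ 2 - (s / 2) ^ 2) = ε ^ 2 by ring]
    exact Real.sqrt_sq hε
  · have : ((s : ℝ) : ℂ) = Complex.mk s 0 := rfl
    rw [this, Complex.dist_mk]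
    rw [show (s / 2 - s) ^ 2 = (s / 2) ^ 2 by ring, show (Real.sqrt (ε ^ 2 - (s / 2) ^ 2) - 0) ^ 2
      = Real.sqrt (ε ^ 2 - (s / 2) ^ 2) ^ 2 by ring, Real.sq_sqrt hnn]
    rw [show (s / 2) ^ 2 + (ε ^ 2 - (s / 2) ^ 2) = ε ^ 2 by ring]
    exact Real.sqrt_sq hε

/-- Weak monotonicity of a metric preserving function of two variables. -/
lemma weakMono {F : ℝ≥0 → ℝ≥0 → ℝ≥0} (hF : IsMetricPreserving2 F)
    (s t ε δ : ℝ≥0) (hs : (s : ℝ) ≤ 2 * ε) (ht : (t : ℝ) ≤ 2 * δ) :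
    F s t ≤ 2 * F ε δ := by
  obtain ⟨y, hy0, hys⟩ := exists_midpt_aux (s : ℝ) (ε : ℝ) s.coe_nonneg hs
  obtain ⟨z, hz0, hzt⟩ := exists_midpt_aux (t : ℝ) (δ : ℝ) t.coe_nonneg ht
  obtain ⟨-, -, tri⟩ := hF ℂ ℂ
  have h := tri ((0 : ℂ), (0 : ℂ)) (y, z) ((((s : ℝ)) : ℂ), (((t : ℝ)) : ℂ))
  have e1 : nndist ((0 : ℂ)) ((((s : ℝ)) : ℂ)) = s := by
    apply NNReal.coe_injective
    rw [coe_nndist]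
    rw [Complex.dist_of_im_eq (by simp), Complex.zero_re, Complex.ofReal_re, Real.dist_eq,
      zero_sub, abs_neg, abs_of_nonneg s.coe_nonneg]
  have e2 : nndist ((0 : ℂ)) ((((t : ℝ)) : ℂ)) = t := by
    apply NNReal.coe_injective
    rw [coe_nndist]
    rw [Complex.dist_of_im_eq (by simp), Complex.zero_re, Complex.ofReal_re, Real.dist_eq,
      zero_sub, abs_neg, abs_of_nonneg t.coe_nonneg]
  have e3 : nndist ((0 : ℂ)) y = ε := NNReal.coe_injective (by rw [coe_nndist, hy0])
  have e4 : nndist ((0 : ℂ)) z = δ := NNReal.coe_injective (by rw [coe_nndist, hz0])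
  have e5 : nndist y ((((s : ℝ)) : ℂ)) = ε := NNReal.coe_injective (by rw [coe_nndist, hys])
  have e6 : nndist z ((((t : ℝ)) : ℂ)) = δ := NNReal.coe_injective (by rw [coe_nndist, hzt])
  simp only [e1, e2, e3, e4, e5, e6] at h
  calc F s t ≤ F ε δ + F ε δ := h
  _ = 2 * F ε δ := (two_mul _).symm

lemma prok_nonneg {α : Type*} [MeasurableSpace α] (d : α → α → ℝ) (lam : ℝ)
    (μ ν : Measure α) : 0 ≤ prokDistD d lam μ ν :=
  Real.sInf_nonneg fun _ hx => hx.1.le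

lemma prok_mem {α : Type*} [MeasurableSpace α] (d : α → α → ℝ) {lam : ℝ} (hlam : 0 < lam)
    (μ μ' : Measure α) [IsProbabilityMeasure μ'] {ε : ℝ}
    (h : prokDistD d lam μ μ' < ε) :
    0 < ε ∧ ∀ A : Set α, MeasurableSet A →
      μ' A ≤ μ {x | ∃ a ∈ A, d x a < ε} + ENNReal.ofReal (lam * ε) := by
  have hne : {ε : ℝ | 0 < ε ∧ ∀ A : Set α, MeasurableSet A →
      μ' A ≤ μ {x | ∃ a ∈ A, d x a < ε} + ENNReal.ofReal (lam * ε)}.Nonempty := by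
    refine ⟨1 / lam + 1, by positivity, fun A _ => ?_⟩
    have h1 : (1 : ℝ≥0∞) ≤ ENNReal.ofReal (lam * (1 / lam + 1)) := by
      rw [show lam * (1 / lam + 1) = 1 + lam by field_simp]
      rw [ENNReal.ofReal_add zero_le_one hlam.le, ENNReal.ofReal_one]
      exact le_add_of_nonneg_right (by positivity)
    calc μ' A ≤ 1 := prob_le_one
    _ ≤ ENNReal.ofReal (lam * (1 / lam + 1)) := h1
    _ ≤ _ := le_add_self
  unfold prokDistD at h
  obtain ⟨c, hc, hcε⟩ := exists_lt_of_csInf_lt hne h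
  refine ⟨hc.1.trans hcε, fun A hA => ?_⟩
  refine (hc.2 A hA).trans (add_le_add (measure_mono ?_) (ENNReal.ofReal_le_ofReal ?_))
  · rintro x ⟨a, haA, hax⟩
    exact ⟨a, haA, hax.trans hcε⟩
  · nlinarith

end AuxLemmas

/-- For Borel probability measures `μ, μ'` on a separable metric space `X`,
`ν, ν'` on a separable metric space `Y`, a continuous metric preserving `F` and `λ > 0`,
`d_P^λ(μ ⊗ ν, μ' ⊗ ν') ≤ max { d_P^λ(μ,μ') + d_P^λ(ν,ν'), 2 F(d_P^λ(μ,μ'), d_P^λ(ν,ν')) }`,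
where the left-hand side is with respect to the metric `d_F` on `X × Y`. -/
theorem prokhorov_prod_le (X Y : Type)
    [MetricSpace X] [MeasurableSpace X] [BorelSpace X] [SeparableSpace X]
    [MetricSpace Y] [MeasurableSpace Y] [BorelSpace Y] [SeparableSpace Y]
    (μ μ' : Measure X) (ν ν' : Measure Y)
    [IsProbabilityMeasure μ] [IsProbabilityMeasure μ']
    [IsProbabilityMeasure ν] [IsProbabilityMeasure ν']
    (F : ℝ≥0 → ℝ≥0 → ℝ≥0) (hF : IsMetricPreserving2 F)
    (hFc : Continuous fun p : ℝ≥0 × ℝ≥0 => F p.1 p.2)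
    (lam : ℝ) (hlam : 0 < lam) :
    prokDistD (fun p q : X × Y => (F (nndist p.1 q.1) (nndist p.2 q.2) : ℝ)) lam
        (μ.prod ν) (μ'.prod ν') ≤
      max (prokDistD dist lam μ μ' + prokDistD dist lam ν ν')
        (2 * (F (prokDistD dist lam μ μ').toNNReal (prokDistD dist lam ν ν').toNNReal : ℝ)) := by
  haveI : SecondCountableTopology X := UniformSpace.secondCountable_of_separable X
  haveI : SecondCountableTopology Y := UniformSpace.secondCountable_of_separable Y
  set a := prokDistD dist lam μ μ' with ha
  set b := prokDistD dist lam ν ν' with hb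
  have ha0 : 0 ≤ a := prok_nonneg _ _ _ _
  have hb0 : 0 ≤ b := prok_nonneg _ _ _ _
  refine le_of_forall_gt_imp_ge_of_dense fun η hη => ?_
  have hab : a + b < η := lt_of_le_of_lt (le_max_left _ _) hη
  have hF0 : 2 * ((F a.toNNReal b.toNNReal : ℝ≥0) : ℝ) < η :=
    lt_of_le_of_lt (le_max_right _ _) hη
  -- choose θ > 0 small enough by continuity
  have hcont : ContinuousAt (fun θ : ℝ =>
      2 * ((F (a + θ).toNNReal (b + θ).toNNReal : ℝ≥0) : ℝ)) 0 := by
    have c1 : Continuous fun θ : ℝ => ((a + θ).toNNReal, (b + θ).toNNReal) :=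
      (continuous_real_toNNReal.comp (continuous_const.add continuous_id)).prodMk
        (continuous_real_toNNReal.comp (continuous_const.add continuous_id))
    exact (continuous_const.mul (NNReal.continuous_coe.comp (hFc.comp c1))).continuousAt
  have hev : ∀ᶠ θ in 𝓝 (0 : ℝ),
      2 * ((F (a + θ).toNNReal (b + θ).toNNReal : ℝ≥0) : ℝ) < η ∧ a + b + 2 * θ < η := by
    refine (hcont.eventually_lt_const (by simpa using hF0)).and ?_
    have : ContinuousAt (fun θ : ℝ => a + b + 2 * θ) 0 := by fun_prop
    exact this.eventually_lt_const (by simpa using hab)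
  obtain ⟨θ, hθ, hθpos⟩ :=
    ((hev.filter_mono nhdsWithin_le_nhds).and self_mem_nhdsWithin).exists (f := 𝓝[>] (0 : ℝ))
  obtain ⟨h1, h2⟩ := hθ
  set ε := a + θ with hε
  set δ := b + θ with hδ
  obtain ⟨hεpos, hεP⟩ := prok_mem dist hlam μ μ' (show a < ε by rw [hε]; linarith)
  obtain ⟨hδpos, hδP⟩ := prok_mem dist hlam ν ν' (show b < δ by rw [hδ]; linarith)
  -- show η is in the defining set of the product Prokhorov distance
  unfold prokDistD
  refine csInf_le ⟨0, fun x hx => hx.1.le⟩ ⟨by linarith, fun A hA => ?_⟩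
  set B : Set (X × Y) := {p | ∃ q ∈ A, dist p.1 q.1 < ε ∧ dist p.2 q.2 < δ} with hBdef
  have hBopen : IsOpen B := by
    have : B = ⋃ q ∈ A, Metric.ball q.1 ε ×ˢ Metric.ball q.2 δ := by
      ext p
      simp only [hBdef, Set.mem_setOf_eq, Set.mem_iUnion, Set.mem_prod, Metric.mem_ball,
        exists_prop]
    rw [this]
    exact isOpen_biUnion fun q _ => Metric.isOpen_ball.prod Metric.isOpen_ball
  have hB : MeasurableSet B := hBopen.measurableSet
  have hGmble : Measurable fun x => ν' (Prod.mk x ⁻¹' A) := measurable_measure_prodMk_left hA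
  have hhmble : Measurable fun x => ν (Prod.mk x ⁻¹' B) := measurable_measure_prodMk_left hB
  set Gr : X → ℝ := fun x => (ν' (Prod.mk x ⁻¹' A)).toReal with hGr
  set hr : X → ℝ := fun x => (ν (Prod.mk x ⁻¹' B)).toReal + lam * δ with hhr
  -- key pointwise estimate
  have key : ∀ t : ℝ, μ' {x | t < Gr x} ≤ μ {x | t < hr x} + ENNReal.ofReal (lam * ε) := by
    intro t
    have hC : MeasurableSet {x | t < Gr x} :=
      measurableSet_lt measurable_const hGmble.ennreal_toReal
    refine (hεP _ hC).trans (add_le_add_left (measure_mono ?_) _)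
    rintro x ⟨c, hc, hxc⟩
    have hslice : MeasurableSet (Prod.mk c ⁻¹' A) := hA.preimage measurable_prodMk_left
    have hsub : {y | ∃ a ∈ Prod.mk c ⁻¹' A, dist y a < δ} ⊆ Prod.mk x ⁻¹' B := by
      rintro y ⟨ya, hya, hy⟩
      exact ⟨(c, ya), hya, hxc, hy⟩
    have hlebig : ν' (Prod.mk c ⁻¹' A) ≤ ν (Prod.mk x ⁻¹' B) + ENNReal.ofReal (lam * δ) :=
      (hδP _ hslice).trans (add_le_add_left (measure_mono hsub) _)
    have hfin : ν (Prod.mk x ⁻¹' B) ≠ ∞ := measure_ne_top _ _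
    have hmono := ENNReal.toReal_mono (by finiteness) hlebig
    show t < hr x
    calc t < Gr c := hc
    _ ≤ (ν (Prod.mk x ⁻¹' B) + ENNReal.ofReal (lam * δ)).toReal := hmono
    _ = (ν (Prod.mk x ⁻¹' B)).toReal + lam * δ := by
        rw [ENNReal.toReal_add hfin ENNReal.ofReal_ne_top,
          ENNReal.toReal_ofReal (by positivity)]
  -- layer cake representations
  have layG : ∫⁻ x, ENNReal.ofReal (Gr x) ∂μ' = ∫⁻ t in Set.Ioi 0, μ' {x | t < Gr x} :=
    lintegral_eq_lintegral_meas_lt μ' (Filter.Eventually.of_forall fun x => ENNReal.toReal_nonneg)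
      hGmble.ennreal_toReal.aemeasurable
  have layH : ∫⁻ x, ENNReal.ofReal (hr x) ∂μ = ∫⁻ t in Set.Ioi 0, μ {x | t < hr x} :=
    lintegral_eq_lintegral_meas_lt μ
      (Filter.Eventually.of_forall fun x => by positivity)
      (hhmble.ennreal_toReal.add measurable_const).aemeasurable
  have eqG : (μ'.prod ν') A = ∫⁻ x, ENNReal.ofReal (Gr x) ∂μ' := by
    rw [Measure.prod_apply hA]
    exact lintegral_congr fun x => (ENNReal.ofReal_toReal (measure_ne_top _ _)).symm
  have hHval : ∫⁻ x, ENNReal.ofReal (hr x) ∂μ = (μ.prod ν) B + ENNReal.ofReal (lam * δ) := by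
    rw [Measure.prod_apply hB]
    have : ∀ x, ENNReal.ofReal (hr x) = ν (Prod.mk x ⁻¹' B) + ENNReal.ofReal (lam * δ) := by
      intro x
      rw [hhr]
      rw [ENNReal.ofReal_add ENNReal.toReal_nonneg (by positivity),
        ENNReal.ofReal_toReal (measure_ne_top _ _)]
    rw [lintegral_congr this, lintegral_add_right _ measurable_const, lintegral_const,
      measure_univ, mul_one]
  -- truncation : integral over Ioi 0 equals integral over Ioc 0 1
  have trunc : ∫⁻ t in Set.Ioi (0 : ℝ), μ' {x | t < Gr x}
      = ∫⁻ t in Set.Ioc (0 : ℝ) 1, μ' {x | t < Gr x} := by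
    rw [← Set.Ioc_union_Ioi_eq_Ioi (zero_le_one (α := ℝ)),
      lintegral_union measurableSet_Ioi (Set.Ioc_disjoint_Ioi le_rfl)]
    have hz : ∀ t ∈ Set.Ioi (1 : ℝ), μ' {x | t < Gr x} = 0 := by
      intro t ht
      convert measure_empty (μ := μ')
      ext x
      simp only [Set.mem_setOf_eq, Set.mem_empty_iff_false, iff_false, not_lt]
      calc Gr x ≤ 1 := by
            rw [hGr]
            exact ENNReal.toReal_le_of_le_ofReal zero_le_one (by simpa using prob_le_one)
      _ ≤ t := ht.le
    rw [setLIntegral_congr_fun measurableSet_Ioi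
      (fun t ht => hz t ht)]
    simp
  -- main chain
  calc (μ'.prod ν') A
      = ∫⁻ t in Set.Ioc (0 : ℝ) 1, μ' {x | t < Gr x} := by rw [eqG, layG, trunc]
  _ ≤ ∫⁻ t in Set.Ioc (0 : ℝ) 1, (μ {x | t < hr x} + ENNReal.ofReal (lam * ε)) :=
      lintegral_mono fun t => key t
  _ = (∫⁻ t in Set.Ioc (0 : ℝ) 1, μ {x | t < hr x}) + ENNReal.ofReal (lam * ε) := by
      rw [lintegral_add_right _ measurable_const, lintegral_const, Measure.restrict_apply
        MeasurableSet.univ, Set.univ_inter, Real.volume_Ioc]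
      norm_num
  _ ≤ (∫⁻ t in Set.Ioi (0 : ℝ), μ {x | t < hr x}) + ENNReal.ofReal (lam * ε) :=
      add_le_add_left (lintegral_mono_set Set.Ioc_subset_Ioi_self) _
  _ = (μ.prod ν) B + ENNReal.ofReal (lam * δ) + ENNReal.ofReal (lam * ε) := by
      rw [← layH, hHval]
  _ ≤ (μ.prod ν) {x | ∃ a ∈ A,
        (fun p q : X × Y => (F (nndist p.1 q.1) (nndist p.2 q.2) : ℝ)) x a < η}
      + ENNReal.ofReal (lam * η) := by
      rw [add_assoc]
      refine add_le_add (measure_mono ?_) ?_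
      · rintro p ⟨q, hq, hd1, hd2⟩
        refine ⟨q, hq, ?_⟩
        have hs : ((nndist p.1 q.1 : ℝ≥0) : ℝ) ≤ 2 * (ε.toNNReal : ℝ) := by
          rw [coe_nndist, Real.coe_toNNReal _ hεpos.le]
          linarith
        have htt : ((nndist p.2 q.2 : ℝ≥0) : ℝ) ≤ 2 * (δ.toNNReal : ℝ) := by
          rw [coe_nndist, Real.coe_toNNReal _ hδpos.le]
          linarith
        have := weakMono hF _ _ _ _ hs htt
        have hco : ((F (nndist p.1 q.1) (nndist p.2 q.2) : ℝ≥0) : ℝ)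
            ≤ 2 * ((F ε.toNNReal δ.toNNReal : ℝ≥0) : ℝ) := by
          exact_mod_cast this
        exact lt_of_le_of_lt hco h1
      · rw [← ENNReal.ofReal_add (by positivity) (by positivity)]
        refine ENNReal.ofReal_le_ofReal ?_
        rw [hδ, hε]
        nlinarith
  _ = _ := rfl
end

section
/- Let F : [0,∞) → [0,∞) be a continuous metric preserving function and let X be an mm-space. Denote by X^F the mm-space (X, F ∘ d_X, m_X). Then for every κ > 0, ObsDiam(X^F; −2κ) ≤ 4 F(ObsDiam(X; −κ)). -/
open MeasureTheory Filter Topology NNReal ENNReal TopologicalSpace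

noncomputable section AuxProofs

/-- Doubling property of metric preserving functions: `F s ≤ 2 F t` whenever `s ≤ 2 t`. -/
private lemma F_doubling {F : ℝ≥0 → ℝ≥0} (hF : IsMetricPreserving1 F) :
    ∀ s t : ℝ≥0, s ≤ 2 * t → F s ≤ 2 * F t := by
  intro s t hst
  obtain ⟨-, -, htri⟩ := hF (ℝ × ℝ)
  have hst' : (s : ℝ) ≤ 2 * (t : ℝ) := by exact_mod_cast hst
  have hs0 : (0:ℝ) ≤ s := s.coe_nonneg
  have ht0 : (0:ℝ) ≤ t := t.coe_nonneg
  have e1 : nndist (((0:ℝ), (0:ℝ))) (((s:ℝ), (0:ℝ))) = s := by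
    apply NNReal.coe_injective
    rw [coe_nndist, Prod.dist_eq]
    simp only [Real.dist_eq, dist_self]
    rw [abs_of_nonpos (by linarith)]
    simp [abs_of_nonneg hs0]
  have e2 : nndist (((0:ℝ), (0:ℝ))) (((t:ℝ), (t:ℝ))) = t := by
    apply NNReal.coe_injective
    rw [coe_nndist, Prod.dist_eq]
    simp only [Real.dist_eq]
    rw [abs_of_nonpos (by linarith)]
    simp
  have e3 : nndist (((t:ℝ), (t:ℝ))) (((s:ℝ), (0:ℝ))) = t := by
    apply NNReal.coe_injective
    rw [coe_nndist, Prod.dist_eq]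
    simp only [Real.dist_eq, sub_zero]
    rw [abs_of_nonneg ht0, max_eq_right (abs_le.mpr ⟨by linarith, by linarith⟩)]
  have h := htri ((0:ℝ), (0:ℝ)) (((t:ℝ), (t:ℝ))) (((s:ℝ), (0:ℝ)))
  rw [e1, e2, e3, ← two_mul] at h
  exact h

/-- Every Borel probability measure on `ℝ` has a median. -/
private lemma exists_median (ν : Measure ℝ) [IsProbabilityMeasure ν] :
    ∃ m : ℝ, ENNReal.ofReal (1/2) ≤ ν (Set.Iic m) ∧ ENNReal.ofReal (1/2) ≤ ν (Set.Ici m) := by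
  have hhalf : ENNReal.ofReal (1/2) < 1 := ENNReal.ofReal_lt_one.mpr (by norm_num)
  set T : Set ℝ := {t : ℝ | ENNReal.ofReal (1/2) ≤ ν (Set.Iic t)} with hT
  have hTne : T.Nonempty := by
    have h1 : Tendsto (fun t : ℝ => ν (Set.Iic t)) atTop (𝓝 1) := by
      simpa using tendsto_measure_Iic_atTop (μ := ν)
    obtain ⟨t, ht⟩ := (h1.eventually (eventually_ge_nhds hhalf)).exists
    exact ⟨t, ht⟩
  have hTbdd : BddBelow T := by
    have h2 : Tendsto (fun n : ℕ => ν (Set.Iic (-(n:ℝ)))) atTop (𝓝 0) := by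
      have hI : ⋂ n : ℕ, Set.Iic (-(n:ℝ)) = ∅ := by
        ext x
        simp only [Set.mem_iInter, Set.mem_Iic, Set.mem_empty_iff_false, iff_false, not_forall,
          not_le]
        obtain ⟨n, hn⟩ := exists_nat_gt (-x)
        exact ⟨n, by linarith⟩
      have h3 := tendsto_measure_iInter_atTop (μ := ν)
        (fun n => measurableSet_Iic.nullMeasurableSet)
        (fun i j hij => Set.Iic_subset_Iic.mpr (neg_le_neg (Nat.cast_le.mpr hij)))
        ⟨0, measure_ne_top ν _⟩
      rwa [hI, measure_empty] at h3
    obtain ⟨n, hn⟩ := (h2.eventually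
      (eventually_lt_nhds (ENNReal.ofReal_pos.mpr (by norm_num : (0:ℝ) < 1/2)))).exists
    refine ⟨-(n:ℝ), fun t ht => ?_⟩
    by_contra hlt
    push_neg at hlt
    have hmono : ν (Set.Iic t) ≤ ν (Set.Iic (-(n:ℝ))) :=
      measure_mono (Set.Iic_subset_Iic.mpr hlt.le)
    exact absurd (ht.trans hmono) (not_le.mpr hn)
  set m := sInf T with hm
  have key1 : ENNReal.ofReal (1/2) ≤ ν (Set.Iic m) := by
    have hI : Set.Iic m = ⋂ n : ℕ, Set.Iic (m + 1/(n+1)) := by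
      ext x
      simp only [Set.mem_Iic, Set.mem_iInter]
      constructor
      · intro h n
        have hp : (0:ℝ) < 1/(n+1) := by positivity
        linarith
      · intro h
        by_contra hx
        push_neg at hx
        obtain ⟨n, hn⟩ := exists_nat_one_div_lt (sub_pos.mpr hx)
        have := h n
        linarith
    have htd := tendsto_measure_iInter_atTop (μ := ν)
      (s := fun n : ℕ => Set.Iic (m + 1/((n:ℝ)+1)))
      (fun n => measurableSet_Iic.nullMeasurableSet)
      (fun i j hij => Set.Iic_subset_Iic.mpr (by
        have h4 : (1:ℝ)/(j+1) ≤ 1/(i+1) := by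
          apply one_div_le_one_div_of_le (by positivity)
          have : (i:ℝ) ≤ j := by exact_mod_cast hij
          linarith
        linarith))
      ⟨0, measure_ne_top ν _⟩
    rw [← hI] at htd
    refine ge_of_tendsto htd (Filter.Eventually.of_forall fun n => ?_)
    simp only [Function.comp_apply]
    have hmlt : m < m + 1/(n+1) := lt_add_of_pos_right m (by positivity)
    obtain ⟨t, htT, htlt⟩ := (csInf_lt_iff hTbdd hTne).mp hmlt
    exact le_trans htT (measure_mono (Set.Iic_subset_Iic.mpr htlt.le))
  have key2 : ENNReal.ofReal (1/2) ≤ ν (Set.Ici m) := by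
    have hI : Set.Ici m = ⋂ n : ℕ, Set.Ioi (m - 1/(n+1)) := by
      ext x
      simp only [Set.mem_Ici, Set.mem_iInter, Set.mem_Ioi]
      constructor
      · intro h n
        have hp : (0:ℝ) < 1/(n+1) := by positivity
        linarith
      · intro h
        by_contra hx
        push_neg at hx
        obtain ⟨n, hn⟩ := exists_nat_one_div_lt (sub_pos.mpr hx)
        have := h n
        linarith
    have htd := tendsto_measure_iInter_atTop (μ := ν)
      (s := fun n : ℕ => Set.Ioi (m - 1/((n:ℝ)+1)))
      (fun n => measurableSet_Ioi.nullMeasurableSet)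
      (fun i j hij => Set.Ioi_subset_Ioi (by
        have h4 : (1:ℝ)/(j+1) ≤ 1/(i+1) := by
          apply one_div_le_one_div_of_le (by positivity)
          have : (i:ℝ) ≤ j := by exact_mod_cast hij
          linarith
        linarith))
      ⟨0, measure_ne_top ν _⟩
    rw [← hI] at htd
    refine ge_of_tendsto htd (Filter.Eventually.of_forall fun n => ?_)
    simp only [Function.comp_apply]
    have hnotT : (m - 1/(n+1)) ∉ T := by
      intro hmem
      have := csInf_le hTbdd hmem
      have hp : (0:ℝ) < 1/(n+1) := by positivity
      rw [← hm] at this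
      linarith
    have hlt : ν (Set.Iic (m - 1/(n+1))) < ENNReal.ofReal (1/2) := not_le.mp hnotT
    by_contra hcon
    push_neg at hcon
    have hsum : ν (Set.Iic (m - 1/(n+1))) + ν (Set.Ioi (m - 1/(n+1))) = 1 := by
      rw [← measure_union (Set.Iic_disjoint_Ioi le_rfl) measurableSet_Ioi, Set.Iic_union_Ioi,
        measure_univ]
    have h1 : ENNReal.ofReal (1/2) + ENNReal.ofReal (1/2) = 1 := by
      rw [← ENNReal.ofReal_add (by norm_num) (by norm_num)]
      norm_num
    have h2 := ENNReal.add_lt_add hlt hcon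
    rw [hsum, h1] at h2
    exact absurd h2 (lt_irrefl 1)
  exact ⟨m, key1, key2⟩

/-- `diamD` for the true distance is bounded by the emetric diameter. -/
private lemma diamD_le_ediam {α : Type*} [PseudoMetricSpace α] (S : Set α) :
    diamD (fun a b => dist a b) S ≤ EMetric.diam S := by
  rw [diamD]
  refine iSup_le fun x => iSup_le fun hx => iSup_le fun y => iSup_le fun hy => ?_
  rw [← edist_dist]
  exact EMetric.edist_le_diam_of_mem hx hy

/-- The core lemma: if `g` is 1-Lipschitz w.r.t. `F ∘ d`, `m` is below a median of `g`,
then the set where `g` exceeds `m + 2 F (D + ε)` cannot have measure `> κ`. -/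
private lemma core_lemma {X : Type} [MetricSpace X] [MeasurableSpace X] [BorelSpace X]
    (μ : Measure X) [IsProbabilityMeasure μ]
    (F : ℝ≥0 → ℝ≥0) (hF2 : ∀ s t : ℝ≥0, s ≤ 2 * t → F s ≤ 2 * F t)
    {κ : ℝ} (hκ : 0 < κ) (hκ2 : κ < 1/2)
    (D : ℝ≥0) (hD : obsDiamD dist μ κ ≤ (D : ℝ≥0∞))
    (g : X → ℝ) (hgm : Measurable g) (hgl : ∀ x y, |g x - g y| ≤ (F (nndist x y) : ℝ))
    (m : ℝ) (hm : ENNReal.ofReal (1/2) ≤ μ (g ⁻¹' Set.Iic m))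
    (ε : ℝ≥0) (hε : 0 < ε)
    (hB : ENNReal.ofReal κ < μ (g ⁻¹' Set.Ioi (m + 2 * (F (D + ε) : ℝ)))) : False := by
  set t : ℝ≥0 := D + ε with htdef
  set B : Set X := g ⁻¹' Set.Ioi (m + 2 * (F t : ℝ)) with hBdef
  have hBmeas : MeasurableSet B := hgm measurableSet_Ioi
  have hBne : B.Nonempty := by
    apply nonempty_of_measure_ne_zero (μ := μ)
    exact fun h0 => absurd (h0 ▸ hB) (by simp [ENNReal.ofReal_pos.mpr hκ])
  set f : X → ℝ := fun x => Metric.infDist x B with hfdef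
  have hfm : Measurable f := (Metric.continuous_infDist_pt B).measurable
  have hfl : ∀ x y : X, |f x - f y| ≤ dist x y := by
    intro x y
    rw [abs_sub_le_iff]
    constructor
    · have := Metric.infDist_le_infDist_add_dist (x := x) (y := y) (s := B)
      linarith
    · have := Metric.infDist_le_infDist_add_dist (x := y) (y := x) (s := B)
      rw [dist_comm] at this
      linarith
  have hpd : partialDiamD (fun a b : ℝ => dist a b) (μ.map f) (1 - κ) ≤ (D : ℝ≥0∞) := by
    refine le_trans ?_ hD
    rw [obsDiamD]
    exact le_iSup_of_le f (le_iSup_of_le ⟨hfm, hfl⟩ le_rfl)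
  have hltt : partialDiamD (fun a b : ℝ => dist a b) (μ.map f) (1 - κ) < ((t : ℝ≥0) : ℝ≥0∞) := by
    refine hpd.trans_lt ?_
    exact_mod_cast lt_add_of_pos_right D hε
  rw [partialDiamD, iInf_lt_iff] at hltt
  obtain ⟨S, hltt⟩ := hltt
  rw [iInf_lt_iff] at hltt
  obtain ⟨⟨hSmeas, hSμ⟩, hSd⟩ := hltt
  rw [Measure.map_apply hfm hSmeas] at hSμ
  -- 0 ∈ S
  have h0S : (0:ℝ) ∈ S := by
    by_contra h0
    have hdisj : Disjoint (f ⁻¹' S) B := by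
      rw [Set.disjoint_left]
      intro x hxS hxB
      have : f x = 0 := Metric.infDist_zero_of_mem hxB
      rw [Set.mem_preimage, this] at hxS
      exact h0 hxS
    have hle1 : μ (f ⁻¹' S) + μ B ≤ 1 := by
      rw [← measure_union hdisj hBmeas]
      exact prob_le_one
    have h1 : ENNReal.ofReal (1 - κ) + ENNReal.ofReal κ = 1 := by
      rw [← ENNReal.ofReal_add (by linarith) (by linarith)]
      norm_num
    have h2 := ENNReal.add_lt_add_of_le_of_lt ENNReal.ofReal_ne_top hSμ hB
    rw [h1] at h2
    exact absurd (h2.trans_le hle1) (lt_irrefl 1)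
  -- a point in A ∩ f⁻¹ S
  have hint : μ (g ⁻¹' Set.Iic m ∩ f ⁻¹' S) ≠ 0 := by
    intro h0
    have h3 := measure_union_add_inter (μ := μ) (g ⁻¹' Set.Iic m) (hfm hSmeas)
    rw [h0, add_zero] at h3
    have h4 : μ (g ⁻¹' Set.Iic m) + μ (f ⁻¹' S) ≤ 1 := h3 ▸ prob_le_one
    have h5 : ENNReal.ofReal (1/2) + ENNReal.ofReal (1 - κ) ≤ 1 := le_trans (add_le_add hm hSμ) h4
    rw [← ENNReal.ofReal_add (by norm_num) (by linarith), ← ENNReal.ofReal_one] at h5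
    have h6 : (1:ℝ)/2 + (1 - κ) ≤ 1 := by
      exact_mod_cast (ENNReal.ofReal_le_ofReal_iff (by norm_num)).mp h5
    linarith
  obtain ⟨a, haA, haS⟩ := nonempty_of_measure_ne_zero hint
  -- f a < t
  have hfa : f a < (t : ℝ) := by
    have h1 : ENNReal.ofReal (dist (f a) 0) ≤ diamD (fun a b : ℝ => dist a b) S := by
      rw [diamD]
      exact le_iSup_of_le (f a) (le_iSup_of_le haS (le_iSup_of_le 0 (le_iSup_of_le h0S le_rfl)))
    have h2 : ENNReal.ofReal (dist (f a) 0) < ENNReal.ofReal (t : ℝ) := by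
      rw [ENNReal.ofReal_coe_nnreal]
      exact h1.trans_lt hSd
    have ht0 : (0:ℝ) < t := by
      have : (0:ℝ≥0) < t := lt_of_lt_of_le hε (by simp [htdef])
      exact_mod_cast this
    have h3 := (ENNReal.ofReal_lt_ofReal_iff ht0).mp h2
    rwa [Real.dist_eq, sub_zero, abs_of_nonneg Metric.infDist_nonneg] at h3
  obtain ⟨b, hbB, hab⟩ := (Metric.infDist_lt_iff hBne).mp hfa
  have hs2t : nndist a b ≤ 2 * t := by
    have h1 : (nndist a b : ℝ) ≤ t := by
      rw [← dist_nndist]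
      exact hab.le
    have h2 : nndist a b ≤ t := by exact_mod_cast h1
    calc nndist a b ≤ t := h2
      _ ≤ 2 * t := le_mul_of_one_le_left (zero_le (a := t)) one_le_two
  have hFb : (F (nndist a b) : ℝ) ≤ 2 * (F t : ℝ) := by
    have := hF2 _ _ hs2t
    exact_mod_cast this
  have h3 : |g a - g b| ≤ 2 * (F t : ℝ) := (hgl a b).trans hFb
  have h4 : g a ≤ m := haA
  have h5 : m + 2 * (F t : ℝ) < g b := hbB
  have h6 := neg_abs_le (g a - g b)
  linarith [abs_le.mp h3]

end AuxProofs

/-- For a continuous metric preserving `F : [0,∞) → [0,∞)` and an mm-space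
`X`, letting `X^F = (X, F ∘ d_X, m_X)`, one has
`ObsDiam(X^F; -2κ) ≤ 4 F(ObsDiam(X; -κ))` for every `κ > 0`. -/
theorem obsDiam_metric_transformed (X : Type)
    [MetricSpace X] [MeasurableSpace X] [BorelSpace X] [SeparableSpace X] [CompleteSpace X]
    (μ : Measure X) [IsProbabilityMeasure μ]
    (F : ℝ≥0 → ℝ≥0) (hF : IsMetricPreserving1 F) (hFc : Continuous F)
    (κ : ℝ) (hκ : 0 < κ) :
    obsDiamD (fun x y : X => (F (nndist x y) : ℝ)) μ (2 * κ) ≤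
      (4 * (F (obsDiamD dist μ κ).toNNReal : ℝ≥0∞)) := by
  by_cases hκ2 : κ < 1/2
  case neg =>
    -- here `1 - 2κ ≤ 0`, so the left-hand side vanishes
    push_neg at hκ2
    rw [obsDiamD]
    refine le_trans (iSup_le fun g => iSup_le fun _ => ?_) zero_le
    rw [partialDiamD]
    refine le_trans (iInf_le_of_le ∅ (iInf_le_of_le ⟨MeasurableSet.empty, ?_⟩ le_rfl)) ?_
    · rw [ENNReal.ofReal_eq_zero.mpr (by linarith)]
      exact zero_le
    · simp [diamD]
  case pos =>
  have hXne : (Set.univ : Set X).Nonempty := by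
    apply nonempty_of_measure_ne_zero (μ := μ)
    simp
  obtain ⟨x₀, -⟩ := hXne
  -- the observable diameter of `X` is finite
  have hfin : obsDiamD dist μ κ ≠ ⊤ := by
    have hU : ⋃ n : ℕ, Metric.closedBall x₀ (n:ℝ) = Set.univ := by
      ext x
      simp only [Set.mem_iUnion, Metric.mem_closedBall, Set.mem_univ, iff_true]
      exact exists_nat_ge (dist x x₀)
    have htend : Tendsto (fun n : ℕ => μ (Metric.closedBall x₀ (n:ℝ))) atTop (𝓝 1) := by
      have h := tendsto_measure_iUnion_atTop (μ := μ)
        (s := fun n : ℕ => Metric.closedBall x₀ (n:ℝ))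
        (fun i j hij => Metric.closedBall_subset_closedBall (by exact_mod_cast hij))
      rwa [hU, measure_univ] at h
    obtain ⟨n, hn⟩ := (htend.eventually
      (eventually_ge_nhds (show ENNReal.ofReal (1-κ) < 1 from
        ENNReal.ofReal_lt_one.mpr (by linarith)))).exists
    have hb : obsDiamD dist μ κ ≤ ENNReal.ofReal (2 * n) := by
      rw [obsDiamD]
      refine iSup_le fun g => iSup_le fun hg => ?_
      obtain ⟨hgm, hgl⟩ := hg
      rw [partialDiamD]
      refine le_trans (iInf_le_of_le (Set.Icc (g x₀ - n) (g x₀ + n))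
        (iInf_le_of_le ⟨measurableSet_Icc, ?_⟩ le_rfl)) ?_
      · rw [Measure.map_apply hgm measurableSet_Icc]
        refine le_trans hn (measure_mono fun x hx => ?_)
        simp only [Set.mem_preimage, Set.mem_Icc]
        have h1 := (hgl x x₀).trans (Metric.mem_closedBall.mp hx)
        rw [abs_le] at h1
        constructor <;> linarith [h1.1, h1.2]
      · refine le_trans (diamD_le_ediam _) ?_
        rw [show EMetric.diam (Set.Icc _ _) = ENNReal.ofReal _ from Real.ediam_Icc _ _]
        exact ENNReal.ofReal_le_ofReal (by linarith)
    exact ne_top_of_le_ne_top ENNReal.ofReal_ne_top hb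
  set D : ℝ≥0 := (obsDiamD dist μ κ).toNNReal with hDdef
  have hD : obsDiamD dist μ κ ≤ (D : ℝ≥0∞) := le_of_eq (ENNReal.coe_toNNReal hfin).symm
  have hF2 := F_doubling hF
  rw [obsDiamD]
  refine iSup_le fun g => iSup_le fun hg => ?_
  obtain ⟨hgm, hgl⟩ := hg
  haveI : IsProbabilityMeasure (μ.map g) := Measure.isProbabilityMeasure_map hgm.aemeasurable
  obtain ⟨m, hm1, hm2⟩ := exists_median (μ.map g)
  rw [Measure.map_apply hgm measurableSet_Iic] at hm1
  rw [Measure.map_apply hgm measurableSet_Ici] at hm2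
  -- key bound, for every positive `ε`
  have key : ∀ ε : ℝ≥0, 0 < ε →
      partialDiamD (fun a b : ℝ => dist a b) (μ.map g) (1 - 2*κ)
        ≤ ((4 * F (D + ε) : ℝ≥0) : ℝ≥0∞) := by
    intro ε hε
    set R : ℝ := 2 * (F (D + ε) : ℝ) with hRdef
    have hgl' : ∀ x y, |(-g x) - (-g y)| ≤ (F (nndist x y) : ℝ) := by
      intro x y
      have hxy : -g x - -g y = -(g x - g y) := by ring
      rw [hxy, abs_neg]
      exact hgl x y
    have hμS : ENNReal.ofReal (1 - 2*κ) ≤ (μ.map g) (Set.Icc (m - R) (m + R)) := by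
      rw [Measure.map_apply hgm measurableSet_Icc]
      by_contra hcon
      push_neg at hcon
      set P := g ⁻¹' Set.Icc (m - R) (m + R) with hPdef
      have hPmeas : MeasurableSet P := hgm measurableSet_Icc
      have hsplit : Pᶜ = g ⁻¹' Set.Iio (m - R) ∪ g ⁻¹' Set.Ioi (m + R) := by
        ext x
        simp only [hPdef, Set.mem_compl_iff, Set.mem_preimage, Set.mem_Icc, Set.mem_union,
          Set.mem_Iio, Set.mem_Ioi, not_and_or, not_le]
      have hadd : μ P + μ Pᶜ = 1 := by rw [measure_add_measure_compl hPmeas, measure_univ]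
      have hcase : ENNReal.ofReal κ < μ (g ⁻¹' Set.Ioi (m + R)) ∨
          ENNReal.ofReal κ < μ (g ⁻¹' Set.Iio (m - R)) := by
        by_contra hno
        push_neg at hno
        obtain ⟨hno1, hno2⟩ := hno
        have hcle : μ Pᶜ ≤ ENNReal.ofReal κ + ENNReal.ofReal κ := by
          rw [hsplit]
          exact le_trans (measure_union_le _ _) (add_le_add hno2 hno1)
        have hlt1 := ENNReal.add_lt_add_of_le_of_lt (measure_ne_top μ Pᶜ) hcle hcon
        rw [add_comm (μ Pᶜ) (μ P), hadd] at hlt1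
        have heq : ENNReal.ofReal κ + ENNReal.ofReal κ + ENNReal.ofReal (1 - 2*κ) = 1 := by
          rw [← ENNReal.ofReal_add (by linarith) (by linarith),
            ← ENNReal.ofReal_add (by linarith) (by linarith)]
          have h9 : κ + κ + (1 - 2*κ) = 1 := by ring
          rw [h9, ENNReal.ofReal_one]
        rw [heq] at hlt1
        exact absurd hlt1 (lt_irrefl 1)
      rcases hcase with h | h
      · rw [hRdef] at h
        exact core_lemma μ F hF2 hκ hκ2 D hD g hgm hgl m hm1 ε hε h
      · have hmed : ENNReal.ofReal (1/2) ≤ μ ((fun x => -g x) ⁻¹' Set.Iic (-m)) := by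
          have hsame : (fun x => -g x) ⁻¹' Set.Iic (-m) = g ⁻¹' Set.Ici m := by
            ext x
            simp only [Set.mem_preimage, Set.mem_Iic, Set.mem_Ici, neg_le_neg_iff]
          rw [hsame]
          exact hm2
        have hset : (fun x => -g x) ⁻¹' Set.Ioi (-m + 2 * (F (D + ε) : ℝ)) =
            g ⁻¹' Set.Iio (m - R) := by
          ext x
          simp only [Set.mem_preimage, Set.mem_Ioi, Set.mem_Iio, hRdef]
          constructor <;> intro h' <;> linarith
        refine core_lemma μ F hF2 hκ hκ2 D hD (fun x => -g x) hgm.neg hgl' (-m) hmed ε hε ?_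
        rw [hset]
        exact h
    rw [partialDiamD]
    refine le_trans (iInf_le_of_le (Set.Icc (m - R) (m + R))
      (iInf_le_of_le ⟨measurableSet_Icc, hμS⟩ le_rfl)) ?_
    refine le_trans (diamD_le_ediam _) ?_
    rw [show EMetric.diam (Set.Icc _ _) = ENNReal.ofReal _ from Real.ediam_Icc _ _]
    have hval : m + R - (m - R) = ((4 * F (D + ε) : ℝ≥0) : ℝ) := by
      push_cast
      rw [hRdef]
      ring
    rw [hval, ENNReal.ofReal_coe_nnreal]
  -- pass to the limit `ε → 0` using continuity of `F`
  have hseq : Tendsto (fun n : ℕ => ((4 * F (D + ((n:ℝ≥0)+1)⁻¹) : ℝ≥0) : ℝ≥0∞)) atTop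
      (𝓝 ((4 * F D : ℝ≥0) : ℝ≥0∞)) := by
    rw [ENNReal.tendsto_coe]
    have h1 : Tendsto (fun n : ℕ => (((n:ℝ≥0)+1)⁻¹ : ℝ≥0)) atTop (𝓝 0) := by
      rw [← NNReal.tendsto_coe]
      have h2 := tendsto_one_div_add_atTop_nhds_zero_nat (𝕜 := ℝ)
      simp only [NNReal.coe_inv, NNReal.coe_add, NNReal.coe_natCast, NNReal.coe_one,
        NNReal.coe_zero]
      simpa [one_div] using h2
    have h2 : Tendsto (fun n : ℕ => D + ((n:ℝ≥0)+1)⁻¹) atTop (𝓝 D) := by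
      have := tendsto_const_nhds.add h1 (f := fun _ : ℕ => D) (x := atTop)
      simpa using this
    exact ((continuous_const.mul hFc).tendsto D).comp h2
  have hfinal : partialDiamD (fun a b : ℝ => dist a b) (μ.map g) (1 - 2*κ)
      ≤ ((4 * F D : ℝ≥0) : ℝ≥0∞) := by
    refine ge_of_tendsto hseq (Filter.Eventually.of_forall fun n => ?_)
    exact key _ (inv_pos.mpr (by positivity))
  refine le_trans hfinal (le_of_eq ?_)
  push_cast
  ring
end

section
/- Let X and Y be two mm-spaces and let p ∈ [1,∞]. Then for any κ ∈ (0,1) and any κ' ∈ (0,1/2), ObsDiam(X ×_p Y; −(κ + κ')) ≤ ObsDiam(X; −κ) + 2 ObsDiam(Y; −κ'). -/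
open MeasureTheory Filter Topology NNReal ENNReal TopologicalSpace

private lemma lpVal_pair_left {p : ℝ≥0∞} (hp : 1 ≤ p) (d : ℝ≥0) :
    lpVal p ![d, 0] = d := by
  unfold lpVal
  split_ifs with h
  · rw [show (Finset.univ : Finset (Fin 2)) = {0, 1} by rfl]; simp
  · have hq : 0 < p.toReal := ENNReal.toReal_pos (zero_lt_one.trans_le hp).ne' h
    rw [Fin.sum_univ_two]
    simp only [Matrix.cons_val_zero, Matrix.cons_val_one, Matrix.head_cons]
    rw [NNReal.zero_rpow hq.ne', add_zero, ← NNReal.rpow_mul, mul_one_div_cancel hq.ne',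
      NNReal.rpow_one]

private lemma lpVal_pair_right {p : ℝ≥0∞} (hp : 1 ≤ p) (d : ℝ≥0) :
    lpVal p ![0, d] = d := by
  unfold lpVal
  split_ifs with h
  · rw [show (Finset.univ : Finset (Fin 2)) = {0, 1} by rfl]; simp
  · have hq : 0 < p.toReal := ENNReal.toReal_pos (zero_lt_one.trans_le hp).ne' h
    rw [Fin.sum_univ_two]
    simp only [Matrix.cons_val_zero, Matrix.cons_val_one, Matrix.head_cons]
    rw [NNReal.zero_rpow hq.ne', zero_add, ← NNReal.rpow_mul, mul_one_div_cancel hq.ne',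
      NNReal.rpow_one]

private lemma le_diamD {α : Type*} (d : α → α → ℝ) {A : Set α} {x y : α}
    (hx : x ∈ A) (hy : y ∈ A) : ENNReal.ofReal (d x y) ≤ diamD d A :=
  le_iSup₂_of_le x hx (le_iSup₂_of_le y hy le_rfl)

private lemma diamD_le {α : Type*} {d : α → α → ℝ} {A : Set α} {c : ℝ≥0∞}
    (h : ∀ x ∈ A, ∀ y ∈ A, ENNReal.ofReal (d x y) ≤ c) : diamD d A ≤ c :=
  iSup₂_le fun x hx => iSup₂_le (h x hx)

private lemma ofReal_one_sub_le {s : ℝ} (hs : 0 ≤ s) :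
    ENNReal.ofReal (1 - s) ≤ 1 - ENNReal.ofReal s := by
  rcases le_or_gt 1 s with h | h
  · rw [ENNReal.ofReal_eq_zero.2 (by linarith : (1:ℝ) - s ≤ 0)]; exact zero_le
  · rw [← ENNReal.ofReal_one, ← ENNReal.ofReal_sub _ hs]


section Median
variable {Ω : Type*} [MeasurableSpace Ω] (ν : Measure Ω) [IsProbabilityMeasure ν]

/-- The set of "upper-median" levels of `g`. -/
private def medSet (g : Ω → ℝ) : Set ℝ := {t | ENNReal.ofReal (1/2) ≤ ν {ω | g ω ≤ t}}

private lemma medSet_upward {g : Ω → ℝ} {t t' : ℝ} (ht : t ∈ medSet ν g) (h : t ≤ t') :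
    t' ∈ medSet ν g :=
  ht.trans (measure_mono fun ω hω => le_trans hω h)

private lemma medSet_nonempty (g : Ω → ℝ) : (medSet ν g).Nonempty := by
  have hU : ⋃ n : ℕ, {ω | g ω ≤ (n : ℝ)} = Set.univ := by
    ext ω
    simp only [Set.mem_iUnion, Set.mem_setOf_eq, Set.mem_univ, iff_true]
    exact ⟨⌈g ω⌉₊, Nat.le_ceil _⟩
  have hmono : Monotone fun n : ℕ => {ω | g ω ≤ (n : ℝ)} := fun n m hnm ω hω =>
    le_trans hω (Nat.cast_le.2 hnm : (n:ℝ) ≤ m)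
  have h1 : (1 : ℝ≥0∞) = ⨆ n : ℕ, ν {ω | g ω ≤ (n : ℝ)} := by
    rw [← hmono.measure_iUnion, hU, measure_univ]
  have hlt : ENNReal.ofReal (1/2) < ⨆ n : ℕ, ν {ω | g ω ≤ (n : ℝ)} := by
    rw [← h1]; exact ENNReal.ofReal_lt_one.2 (by norm_num)
  obtain ⟨n, hn⟩ := lt_iSup_iff.mp hlt
  exact ⟨n, hn.le⟩

private lemma medSet_bddBelow (g : Ω → ℝ) (hg : Measurable g) : BddBelow (medSet ν g) := by
  by_contra hb
  have hall : ∀ c : ℝ, c ∈ medSet ν g := by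
    intro c
    rcases not_bddBelow_iff.mp hb c with ⟨t, htS, htc⟩
    exact medSet_upward ν htS htc.le
  have hI : ⋂ n : ℕ, {ω | g ω ≤ -(n : ℝ)} = ∅ := by
    ext ω
    simp only [Set.mem_iInter, Set.mem_setOf_eq, Set.mem_empty_iff_false, iff_false, not_forall,
      not_le]
    obtain ⟨n, hn⟩ := exists_nat_gt (-g ω)
    exact ⟨n, by linarith⟩
  have hanti : Antitone fun n : ℕ => {ω | g ω ≤ -(n : ℝ)} := fun n m hnm ω hω =>
    le_trans hω (neg_le_neg (Nat.cast_le.2 hnm : (n:ℝ) ≤ m))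
  have := hanti.measure_iInter (fun n => (hg measurableSet_Iic).nullMeasurableSet)
    ⟨0, measure_ne_top ν _⟩
  rw [hI, measure_empty] at this
  have h2 : ENNReal.ofReal (1/2) ≤ ⨅ n : ℕ, ν {ω | g ω ≤ -(n : ℝ)} :=
    le_iInf fun n => hall _
  rw [← this] at h2
  simp only [nonpos_iff_eq_zero, ENNReal.ofReal_eq_zero] at h2
  norm_num at h2

/-- Median of `g` w.r.t. `ν`. -/
noncomputable def medOf (g : Ω → ℝ) : ℝ := sInf (medSet ν g)

private lemma medOf_le_add {g g' : Ω → ℝ} (hg : Measurable g) (hg' : Measurable g') {c : ℝ}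
    (hc : 0 ≤ c) (h : ∀ ω, g ω ≤ g' ω + c) : medOf ν g ≤ medOf ν g' + c := by
  have hsub : ∀ t ∈ medSet ν g', t + c ∈ medSet ν g := by
    intro t ht
    refine ht.trans (measure_mono fun ω hω => ?_)
    have := h ω
    simp only [Set.mem_setOf_eq] at hω ⊢
    linarith
  have : ∀ t ∈ medSet ν g', medOf ν g - c ≤ t := fun t ht => by
    have := csInf_le (medSet_bddBelow ν g hg) (hsub t ht)
    simp only [medOf]; linarith
  have h2 : medOf ν g - c ≤ medOf ν g' := le_csInf (medSet_nonempty ν g') this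
  linarith

private lemma measure_le_medOf (g : Ω → ℝ) (hg : Measurable g) :
    ENNReal.ofReal (1/2) ≤ ν {ω | g ω ≤ medOf ν g} := by
  have hseq : {ω | g ω ≤ medOf ν g} = ⋂ n : ℕ, {ω | g ω ≤ medOf ν g + 1/(n+1)} := by
    ext ω
    simp only [Set.mem_iInter, Set.mem_setOf_eq]
    constructor
    · intro hω n
      have : (0:ℝ) < 1/(n+1) := by positivity
      linarith
    · intro hω
      by_contra hcon
      push_neg at hcon
      obtain ⟨n, hn⟩ := exists_nat_one_div_lt (show (0:ℝ) < g ω - medOf ν g by linarith)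
      linarith [hω n]
  have hanti : Antitone fun n : ℕ => {ω | g ω ≤ medOf ν g + 1/(n+1:ℝ)} := by
    intro n m hnm ω hω
    have h1 : (1:ℝ)/(m+1) ≤ 1/(n+1) :=
      one_div_le_one_div_of_le (by positivity) (by have := (Nat.cast_le.2 hnm : (n:ℝ) ≤ m); linarith)
    simp only [Set.mem_setOf_eq] at hω ⊢
    linarith
  rw [hseq, hanti.measure_iInter (fun n => (hg measurableSet_Iic).nullMeasurableSet)
    ⟨0, measure_ne_top ν _⟩]
  refine le_iInf fun n => ?_
  have hlt : sInf (medSet ν g) < medOf ν g + 1/(n+1:ℝ) := by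
    simp only [medOf]
    have : (0:ℝ) < 1/(n+1) := by positivity
    linarith
  obtain ⟨t, htS, ht⟩ := (csInf_lt_iff (medSet_bddBelow ν g hg) (medSet_nonempty ν g)).mp hlt
  exact medSet_upward ν htS ht.le

private lemma measure_medOf_le (g : Ω → ℝ) (hg : Measurable g) :
    ENNReal.ofReal (1/2) ≤ ν {ω | medOf ν g ≤ g ω} := by
  have hseq : {ω | medOf ν g ≤ g ω} = ⋂ n : ℕ, {ω | medOf ν g - 1/(n+1) < g ω} := by
    ext ω
    simp only [Set.mem_iInter, Set.mem_setOf_eq]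
    constructor
    · intro hω n
      have : (0:ℝ) < 1/(n+1) := by positivity
      linarith
    · intro hω
      by_contra hcon
      push_neg at hcon
      obtain ⟨n, hn⟩ := exists_nat_one_div_lt (show (0:ℝ) < medOf ν g - g ω by linarith)
      linarith [hω n]
  have hanti : Antitone fun n : ℕ => {ω | medOf ν g - 1/(n+1:ℝ) < g ω} := by
    intro n m hnm ω hω
    have h1 : (1:ℝ)/(m+1) ≤ 1/(n+1) :=
      one_div_le_one_div_of_le (by positivity) (by have := (Nat.cast_le.2 hnm : (n:ℝ) ≤ m); linarith)
    simp only [Set.mem_setOf_eq] at hω ⊢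
    linarith
  rw [hseq, hanti.measure_iInter (fun n => (hg measurableSet_Ioi).nullMeasurableSet)
    ⟨0, measure_ne_top ν _⟩]
  refine le_iInf fun n => ?_
  have hnot : medOf ν g - 1/(n+1:ℝ) ∉ medSet ν g := by
    intro hmem
    have := csInf_le (medSet_bddBelow ν g hg) hmem
    simp only [medOf] at this
    have h0 : (0:ℝ) < 1/(n+1) := by positivity
    linarith
  have hlt : ν {ω | g ω ≤ medOf ν g - 1/(n+1:ℝ)} < ENNReal.ofReal (1/2) := lt_of_not_ge hnot
  have hcompl : {ω | medOf ν g - 1/(n+1:ℝ) < g ω} = {ω | g ω ≤ medOf ν g - 1/(n+1:ℝ)}ᶜ := by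
    ext ω; simp [not_le]
  have hpc : ν {ω | g ω ≤ medOf ν g - 1/(n+1:ℝ)}ᶜ = 1 - ν {ω | g ω ≤ medOf ν g - 1/(n+1:ℝ)} :=
    prob_compl_eq_one_sub (hg measurableSet_Iic)
  rw [hcompl, hpc]
  have h12 : (1:ℝ≥0∞) - ENNReal.ofReal (1/2) = ENNReal.ofReal (1/2) := by
    rw [← ENNReal.ofReal_one, ← ENNReal.ofReal_sub _ (by norm_num)]
    norm_num
  calc ENNReal.ofReal (1/2) = 1 - ENNReal.ofReal (1/2) := h12.symm
    _ ≤ 1 - ν {ω | g ω ≤ medOf ν g - 1/(n+1:ℝ)} := tsub_le_tsub_left hlt.le 1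

end Median

/-- For mm-spaces `X`, `Y` and `p ∈ [1,∞]`,
`ObsDiam(X ×_p Y; -(κ+κ')) ≤ ObsDiam(X; -κ) + 2 ObsDiam(Y; -κ')` for `κ ∈ (0,1)`,
`κ' ∈ (0,1/2)`. -/
theorem obsDiam_lp_prod (X Y : Type)
    [MetricSpace X] [MeasurableSpace X] [BorelSpace X] [SeparableSpace X] [CompleteSpace X]
    [MetricSpace Y] [MeasurableSpace Y] [BorelSpace Y] [SeparableSpace Y] [CompleteSpace Y]
    (μ : Measure X) [IsProbabilityMeasure μ] (ν : Measure Y) [IsProbabilityMeasure ν]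
    (p : ℝ≥0∞) (hp : 1 ≤ p)
    (κ κ' : ℝ) (hκ : κ ∈ Set.Ioo (0 : ℝ) 1) (hκ' : κ' ∈ Set.Ioo (0 : ℝ) (1 / 2)) :
    obsDiamD (fun a b : X × Y => (lpVal p ![nndist a.1 b.1, nndist a.2 b.2] : ℝ))
        (μ.prod ν) (κ + κ') ≤
      obsDiamD dist μ κ + 2 * obsDiamD dist ν κ' := by
  obtain ⟨hκ0, hκ1⟩ := hκ
  obtain ⟨hκ'0, hκ'1⟩ := hκ'
  set OX := obsDiamD dist μ κ with hOXdef
  set OY := obsDiamD dist ν κ' with hOYdef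
  by_cases hOX : OX = ⊤
  · rw [hOX, top_add]; exact le_top
  by_cases hOY : OY = ⊤
  · rw [hOY, ENNReal.mul_top (by norm_num), add_top]; exact le_top
  unfold obsDiamD
  refine iSup₂_le fun f hf => ?_
  obtain ⟨hfm, hfl⟩ := hf
  have hg : ∀ x : X, Measurable fun y => f (x, y) := fun x =>
    hfm.comp measurable_prodMk_left
  have hfx : ∀ (x x' : X) (y : Y), |f (x, y) - f (x', y)| ≤ dist x x' := by
    intro x x' y
    have h := hfl (x, y) (x', y)
    simp only [nndist_self] at h
    rwa [lpVal_pair_left hp, ← dist_nndist] at h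
  have hfy : ∀ (x : X) (y y' : Y), |f (x, y) - f (x, y')| ≤ dist y y' := by
    intro x y y'
    have h := hfl (x, y) (x, y')
    simp only [nndist_self] at h
    rwa [lpVal_pair_right hp, ← dist_nndist] at h
  set h : X → ℝ := fun x => medOf ν (fun y => f (x, y)) with hhdef
  have hlip : ∀ x x', |h x - h x'| ≤ dist x x' := by
    intro x x'
    have h1 : h x ≤ h x' + dist x x' := by
      simp only [hhdef]
      exact medOf_le_add ν (hg x) (hg x') dist_nonneg fun y => by
        have := (abs_le.mp (hfx x x' y)).2; linarith
    have h2 : h x' ≤ h x + dist x x' := by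
      simp only [hhdef]
      rw [dist_comm]
      exact medOf_le_add ν (hg x') (hg x) dist_nonneg fun y => by
        have := (abs_le.mp (hfx x' x y)).2; linarith
    rw [abs_le]; constructor <;> linarith
  have hhm : Measurable h := by
    have hL : LipschitzWith 1 h := LipschitzWith.of_dist_le_mul fun x x' => by
      rw [Real.dist_eq, NNReal.coe_one, one_mul]; exact hlip x x'
    exact hL.continuous.measurable
  have hmed1 : ∀ x, ENNReal.ofReal (1/2) ≤ ν {y | f (x, y) ≤ h x} := by
    intro x; simp only [hhdef]; exact measure_le_medOf ν _ (hg x)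
  have hmed2 : ∀ x, ENNReal.ofReal (1/2) ≤ ν {y | h x ≤ f (x, y)} := by
    intro x; simp only [hhdef]; exact measure_medOf_le ν _ (hg x)
  have main : ∀ ε : ℝ, 0 < ε →
      partialDiamD (fun a b : ℝ => dist a b) ((μ.prod ν).map f) (1 - (κ + κ')) ≤
        OX + 2 * OY + ENNReal.ofReal (5 * ε) := by
    intro ε hε
    set εE := ENNReal.ofReal ε with hεEdef
    have hεE0 : εE ≠ 0 := ne_of_gt (ENNReal.ofReal_pos.2 hε)
    have hεEtop : εE ≠ ⊤ := ENNReal.ofReal_ne_top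
    have hOYεtop : OY + εE ≠ ⊤ := ENNReal.add_ne_top.2 ⟨hOY, hεEtop⟩
    have hOXεtop : OX + εE ≠ ⊤ := ENNReal.add_ne_top.2 ⟨hOX, hεEtop⟩
    set r := (OY + εE).toReal with hrdef
    set DX := (OX + εE).toReal with hDXdef
    have hr0 : 0 ≤ r := ENNReal.toReal_nonneg
    have hDX0 : 0 ≤ DX := ENNReal.toReal_nonneg
    -- extract a set A for the X-marginal
    have h1 : partialDiamD (fun a b : ℝ => dist a b) (μ.map h) (1 - κ) ≤ OX := by
      rw [hOXdef]; unfold obsDiamD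
      exact le_iSup₂_of_le h ⟨hhm, hlip⟩ le_rfl
    have h2 := h1.trans_lt (ENNReal.lt_add_right hOX hεE0)
    simp only [partialDiamD, iInf_lt_iff] at h2
    obtain ⟨A, ⟨hAm, hAμ⟩, hAd⟩ := h2
    -- key concentration estimate for the Y-direction
    have key : ∀ x : X, ENNReal.ofReal (1 - κ') ≤ ν {y | |f (x, y) - h x| ≤ r} := by
      intro x
      have k1 : partialDiamD (fun a b : ℝ => dist a b) (ν.map fun y => f (x, y)) (1 - κ')
          ≤ OY := by
        rw [hOYdef]; unfold obsDiamD
        exact le_iSup₂_of_le (fun y => f (x, y)) ⟨hg x, fun y y' => hfy x y y'⟩ le_rfl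
      have k2 := k1.trans_lt (ENNReal.lt_add_right hOY hεE0)
      simp only [partialDiamD, iInf_lt_iff] at k2
      obtain ⟨B, ⟨hBm, hBν⟩, hBd⟩ := k2
      have hBsub : ∀ s ∈ B, ∀ t ∈ B, |s - t| ≤ r := by
        intro s hs t ht
        have hd := (le_diamD (fun a b : ℝ => dist a b) hs ht).trans hBd.le
        rw [← Real.dist_eq]
        exact (ENNReal.ofReal_le_iff_le_toReal hOYεtop).mp hd
      have hBν' : ENNReal.ofReal (1 - κ') ≤ ν ((fun y => f (x, y)) ⁻¹' B) := by
        rwa [Measure.map_apply (hg x) hBm] at hBν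
      have hinter : ∀ Q : Set Y, MeasurableSet Q → ENNReal.ofReal (1/2) ≤ ν Q →
          (((fun y => f (x, y)) ⁻¹' B) ∩ Q).Nonempty := by
        intro Q hQm hQν
        rw [Set.nonempty_iff_ne_empty]
        intro hempty
        have h0 : ν (((fun y => f (x, y)) ⁻¹' B) ∩ Q) = 0 := by
          rw [hempty, measure_empty]
        have hiu := measure_union_add_inter (μ := ν) ((fun y => f (x, y)) ⁻¹' B) hQm
        rw [h0, add_zero] at hiu
        have hle : ν (((fun y => f (x, y)) ⁻¹' B) ∪ Q) ≤ 1 := prob_le_one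
        have hge : ENNReal.ofReal (1 - κ') + ENNReal.ofReal (1/2) ≤
            ν (((fun y => f (x, y)) ⁻¹' B) ∪ Q) := by
          rw [hiu]; exact add_le_add hBν' hQν
        have hgt : (1 : ℝ≥0∞) < ENNReal.ofReal (1 - κ') + ENNReal.ofReal (1/2) := by
          rw [← ENNReal.ofReal_add (by linarith) (by norm_num), ← ENNReal.ofReal_one]
          exact (ENNReal.ofReal_lt_ofReal_iff (by linarith)).2 (by linarith)
        exact absurd (hge.trans hle) hgt.not_ge
      obtain ⟨y₀, hy₀⟩ := hinter {y | f (x, y) ≤ h x}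
        (measurableSet_le (hg x) measurable_const) (hmed1 x)
      obtain ⟨y₁, hy₁⟩ := hinter {y | h x ≤ f (x, y)}
        (measurableSet_le measurable_const (hg x)) (hmed2 x)
      have hsub2 : ((fun y => f (x, y)) ⁻¹' B) ⊆ {y | |f (x, y) - h x| ≤ r} := by
        intro y hy
        have ha1 := abs_le.mp (hBsub _ hy₀.1 _ hy)
        have ha2 := abs_le.mp (hBsub _ hy _ hy₁.1)
        have h₀ : f (x, y₀) ≤ h x := hy₀.2
        have h₁ : h x ≤ f (x, y₁) := hy₁.2
        rw [Set.mem_setOf_eq, abs_le]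
        constructor
        · linarith [ha2.2]
        · linarith [ha1.1]
      exact hBν'.trans (measure_mono hsub2)
    -- the target set on ℝ
    set SS : Set ℝ := {t | Metric.infDist t A ≤ r} with hSSdef
    have hSSm : MeasurableSet SS :=
      (isClosed_le (Metric.continuous_infDist_pt A) continuous_const).measurableSet
    have hAne : A.Nonempty := by
      rw [Set.nonempty_iff_ne_empty]
      intro hempty
      rw [hempty, measure_empty] at hAμ
      rw [nonpos_iff_eq_zero, ENNReal.ofReal_eq_zero] at hAμ
      linarith
    set E1 : Set (X × Y) := {q | h q.1 ∈ A} with hE1def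
    set E2 : Set (X × Y) := {q | |f q - h q.1| ≤ r} with hE2def
    have hE1m : MeasurableSet E1 := (hhm.comp measurable_fst) hAm
    have hE2m : MeasurableSet E2 :=
      measurableSet_le (hfm.sub (hhm.comp measurable_fst)).abs measurable_const
    have hE1 : (μ.prod ν) E1ᶜ ≤ ENNReal.ofReal κ := by
      have hE1eq : E1 = (h ⁻¹' A) ×ˢ (Set.univ : Set Y) := by
        ext q; simp [hE1def, Set.mem_prod]
      have hmeas1 : ENNReal.ofReal (1 - κ) ≤ (μ.prod ν) E1 := by
        rw [hE1eq, Measure.prod_prod, measure_univ, mul_one]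
        rwa [Measure.map_apply hhm hAm] at hAμ
      rw [prob_compl_eq_one_sub hE1m]
      calc 1 - (μ.prod ν) E1 ≤ 1 - ENNReal.ofReal (1 - κ) := tsub_le_tsub_left hmeas1 1
        _ = ENNReal.ofReal κ := by
            rw [← ENNReal.ofReal_one, ← ENNReal.ofReal_sub _ (by linarith)]
            norm_num
    have hslice : ∀ x, ν (Prod.mk x ⁻¹' E2ᶜ) ≤ ENNReal.ofReal κ' := by
      intro x
      have hm' : MeasurableSet {y | |f (x, y) - h x| ≤ r} :=
        measurableSet_le ((hg x).sub measurable_const).abs measurable_const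
      have hpre : Prod.mk x ⁻¹' E2ᶜ = {y | |f (x, y) - h x| ≤ r}ᶜ := rfl
      have hpc : ν {y | |f (x, y) - h x| ≤ r}ᶜ = 1 - ν {y | |f (x, y) - h x| ≤ r} :=
        prob_compl_eq_one_sub hm'
      rw [hpre, hpc]
      calc 1 - ν {y | |f (x, y) - h x| ≤ r} ≤ 1 - ENNReal.ofReal (1 - κ') :=
            tsub_le_tsub_left (key x) 1
        _ = ENNReal.ofReal κ' := by
            rw [← ENNReal.ofReal_one, ← ENNReal.ofReal_sub _ (by linarith)]
            norm_num
    have hE2 : (μ.prod ν) E2ᶜ ≤ ENNReal.ofReal κ' := by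
      rw [Measure.prod_apply hE2m.compl]
      calc ∫⁻ x, ν (Prod.mk x ⁻¹' E2ᶜ) ∂μ ≤ ∫⁻ _, ENNReal.ofReal κ' ∂μ :=
            lintegral_mono fun x => hslice x
        _ = ENNReal.ofReal κ' := by rw [lintegral_const, measure_univ, mul_one]
    have hsubE : E1 ∩ E2 ⊆ f ⁻¹' SS := by
      rintro ⟨x, y⟩ ⟨h1q, h2q⟩
      have hdd : Metric.infDist (f (x, y)) A ≤ dist (f (x, y)) (h x) :=
        Metric.infDist_le_dist_of_mem h1q
      rw [Real.dist_eq] at hdd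
      exact hdd.trans h2q
    have hmeasS : ENNReal.ofReal (1 - (κ + κ')) ≤ ((μ.prod ν).map f) SS := by
      rw [Measure.map_apply hfm hSSm]
      have hcompl : (μ.prod ν) (E1 ∩ E2)ᶜ ≤ ENNReal.ofReal (κ + κ') := by
        rw [Set.compl_inter]
        refine (measure_union_le _ _).trans ?_
        rw [ENNReal.ofReal_add hκ0.le hκ'0.le]
        exact add_le_add hE1 hE2
      have hEq : (μ.prod ν) (E1 ∩ E2) = 1 - (μ.prod ν) (E1 ∩ E2)ᶜ := by
        rw [prob_compl_eq_one_sub (hE1m.inter hE2m),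
          ENNReal.sub_sub_cancel ENNReal.one_ne_top prob_le_one]
      calc ENNReal.ofReal (1 - (κ + κ')) ≤ 1 - ENNReal.ofReal (κ + κ') :=
            ofReal_one_sub_le (by linarith)
        _ ≤ 1 - (μ.prod ν) (E1 ∩ E2)ᶜ := tsub_le_tsub_left hcompl 1
        _ = (μ.prod ν) (E1 ∩ E2) := hEq.symm
        _ ≤ (μ.prod ν) (f ⁻¹' SS) := measure_mono hsubE
    have hAdiam : ∀ a ∈ A, ∀ a' ∈ A, |a - a'| ≤ DX := by
      intro a ha a' ha'
      have hd := (le_diamD (fun a b : ℝ => dist a b) ha ha').trans hAd.le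
      rw [← Real.dist_eq]
      exact (ENNReal.ofReal_le_iff_le_toReal hOXεtop).mp hd
    have hr' : ENNReal.ofReal r = OY + εE := by
      rw [hrdef]; exact ENNReal.ofReal_toReal hOYεtop
    have hDX' : ENNReal.ofReal DX = OX + εE := by
      rw [hDXdef]; exact ENNReal.ofReal_toReal hOXεtop
    have h5ε : ENNReal.ofReal (5 * ε) = 5 * εE := by
      rw [ENNReal.ofReal_mul (by norm_num : (0:ℝ) ≤ 5), hεEdef]
      norm_num
    have hdiamS : diamD (fun a b : ℝ => dist a b) SS ≤
        OX + 2 * OY + ENNReal.ofReal (5 * ε) := by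
      refine diamD_le fun s hs t ht => ?_
      obtain ⟨a, haA, hsa⟩ := (Metric.infDist_lt_iff hAne).mp
        (lt_of_le_of_lt hs (lt_add_of_pos_right r hε))
      obtain ⟨a', ha'A, hta⟩ := (Metric.infDist_lt_iff hAne).mp
        (lt_of_le_of_lt ht (lt_add_of_pos_right r hε))
      have htri : dist s t ≤ (r + ε) + DX + (r + ε) := by
        have h4 : dist s t ≤ dist s a + dist a a' + dist a' t := dist_triangle4 s a a' t
        have haa : dist a a' ≤ DX := by rw [Real.dist_eq]; exact hAdiam a haA a' ha'A
        have h5 : dist a' t = dist t a' := dist_comm _ _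
        linarith
      calc ENNReal.ofReal (dist s t)
          ≤ ENNReal.ofReal ((r + ε) + DX + (r + ε)) := ENNReal.ofReal_le_ofReal htri
        _ ≤ (ENNReal.ofReal r + ENNReal.ofReal ε) + ENNReal.ofReal DX +
              (ENNReal.ofReal r + ENNReal.ofReal ε) :=
            le_trans ENNReal.ofReal_add_le (add_le_add
              (le_trans ENNReal.ofReal_add_le
                (add_le_add ENNReal.ofReal_add_le le_rfl))
              ENNReal.ofReal_add_le)
        _ = OX + 2 * OY + ENNReal.ofReal (5 * ε) := by
            rw [hr', hDX', ← hεEdef, h5ε]; ring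
    calc partialDiamD (fun a b : ℝ => dist a b) ((μ.prod ν).map f) (1 - (κ + κ'))
        ≤ diamD (fun a b : ℝ => dist a b) SS := by
          unfold partialDiamD
          exact iInf₂_le SS ⟨hSSm, hmeasS⟩
      _ ≤ OX + 2 * OY + ENNReal.ofReal (5 * ε) := hdiamS
  refine ENNReal.le_of_forall_pos_le_add fun η hη _ => ?_
  have hmain := main ((η : ℝ) / 5) (div_pos (NNReal.coe_pos.2 hη) (by norm_num))
  have h5 : (5 : ℝ) * ((η : ℝ) / 5) = (η : ℝ) := by ring
  rw [h5, ENNReal.ofReal_coe_nnreal] at hmain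
  exact hmain
end

section
/- Let X and Y be two mm-spaces and let F : [0,∞)² → [0,∞) be a continuous metric preserving function. Then for any κ ∈ (0,1) and any κ' ∈ (0,1/4), ObsDiam(X ×_F Y; −2(κ + κ')) ≤ 4 F(ObsDiam(X; −κ), 0) + 8 F(0, ObsDiam(Y; −κ')). -/
open MeasureTheory Filter Topology NNReal ENNReal TopologicalSpace

noncomputable section AuxObsDiam

open MeasureTheory Set Filter Topology

namespace ObsDiamAux

/-! ### Generic lemmas about `diamD`, `partialDiamD`, `obsDiamD` -/

variable {α : Type*}

lemma le_diamD (d : α → α → ℝ) {A : Set α} {x y : α} (hx : x ∈ A) (hy : y ∈ A) :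
    ENNReal.ofReal (d x y) ≤ diamD d A := by
  unfold diamD
  exact le_iSup₂_of_le x hx (le_iSup₂_of_le y hy le_rfl)

lemma diamD_Icc_le (l r : ℝ) :
    diamD (fun a b : ℝ => dist a b) (Set.Icc l r) ≤ ENNReal.ofReal (r - l) := by
  unfold diamD
  refine iSup₂_le fun x hx => iSup₂_le fun y hy => ENNReal.ofReal_le_ofReal ?_
  show dist x y ≤ r - l
  rw [Real.dist_eq]
  exact abs_le.mpr ⟨by linarith [hx.1, hx.2, hy.1, hy.2], by linarith [hx.1, hx.2, hy.1, hy.2]⟩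

lemma partialDiamD_le_diamD {mα : MeasurableSpace α} (d : α → α → ℝ) (μ : Measure α) (a : ℝ)
    {A : Set α} (hA : MeasurableSet A) (h : ENNReal.ofReal a ≤ μ A) :
    partialDiamD d μ a ≤ diamD d A := by
  unfold partialDiamD
  exact iInf₂_le A ⟨hA, h⟩

lemma partialDiamD_le_obsDiamD {mα : MeasurableSpace α} (d : α → α → ℝ) (μ : Measure α) (κ : ℝ)
    {f : α → ℝ} (hf : Measurable f ∧ ∀ x y, |f x - f y| ≤ d x y) :
    partialDiamD (fun a b : ℝ => dist a b) (μ.map f) (1 - κ) ≤ obsDiamD d μ κ := by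
  unfold obsDiamD
  exact le_iSup₂_of_le f hf le_rfl

/-! ### Medians -/

def medSet {mα : MeasurableSpace α} (ρ : Measure α) (g : α → ℝ) : Set ℝ :=
  {t : ℝ | 2⁻¹ ≤ ρ {y | g y ≤ t}}

def med {mα : MeasurableSpace α} (ρ : Measure α) (g : α → ℝ) : ℝ :=
  sInf (medSet ρ g)

variable {mα : MeasurableSpace α} (ρ : Measure α) [IsProbabilityMeasure ρ] {g : α → ℝ}

lemma medSet_nonempty (hg : Measurable g) : (medSet ρ g).Nonempty := by
  have hmono : Monotone fun n : ℕ => {y | g y ≤ (n : ℝ)} := by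
    intro i j hij y hy
    simp only [mem_setOf_eq] at hy ⊢
    have hij' : (i : ℝ) ≤ j := by exact_mod_cast hij
    linarith
  have ht := tendsto_measure_iUnion_atTop (μ := ρ) hmono
  have hU : (⋃ n : ℕ, {y | g y ≤ (n : ℝ)}) = univ := by
    ext y
    simp only [mem_iUnion, mem_setOf_eq, mem_univ, iff_true]
    exact exists_nat_ge (g y)
  rw [hU, measure_univ] at ht
  have h2 : (2 : ℝ≥0∞)⁻¹ < 1 := by norm_num
  obtain ⟨n, hn⟩ := (ht.eventually (eventually_gt_nhds h2)).exists
  exact ⟨n, hn.le⟩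

lemma medSet_bddBelow (hg : Measurable g) : BddBelow (medSet ρ g) := by
  have hanti : Antitone fun n : ℕ => {y | g y ≤ -(n : ℝ)} := by
    intro i j hij y hy
    simp only [mem_setOf_eq] at hy ⊢
    have hij' : (i : ℝ) ≤ j := by exact_mod_cast hij
    linarith
  have ht := tendsto_measure_iInter_atTop (μ := ρ)
    (fun n => (measurableSet_le hg measurable_const).nullMeasurableSet) hanti
    ⟨0, measure_ne_top ρ _⟩
  have hI : (⋂ n : ℕ, {y | g y ≤ -(n : ℝ)}) = (∅ : Set α) := by
    ext y
    simp only [mem_iInter, mem_setOf_eq, mem_empty_iff_false, iff_false, not_forall]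
    obtain ⟨n, hn⟩ := exists_nat_gt (-g y)
    exact ⟨n, by push_neg; linarith⟩
  rw [hI, measure_empty] at ht
  have h2 : (0 : ℝ≥0∞) < 2⁻¹ := by norm_num
  obtain ⟨n, hn⟩ := (ht.eventually (eventually_lt_nhds h2)).exists
  refine ⟨-(n : ℝ), fun t htS => ?_⟩
  by_contra hlt
  push_neg at hlt
  exact absurd (le_trans htS (measure_mono fun y hy => le_trans hy hlt.le)) (not_le.mpr hn)

lemma measure_le_med (hg : Measurable g) : 2⁻¹ ≤ ρ {y | g y ≤ med ρ g} := by
  have hne := medSet_nonempty ρ hg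
  have hbd := medSet_bddBelow ρ hg
  have hmem : ∀ n : ℕ, 2⁻¹ ≤ ρ {y | g y ≤ med ρ g + ((n : ℝ) + 1)⁻¹} := by
    intro n
    have hpos : (0 : ℝ) < ((n : ℝ) + 1)⁻¹ := by positivity
    obtain ⟨t, htS, htlt⟩ := (csInf_lt_iff hbd hne).mp
      (lt_add_of_pos_right (med ρ g) hpos)
    exact le_trans htS (measure_mono fun y hy => le_trans hy htlt.le)
  have hanti : Antitone fun n : ℕ => {y | g y ≤ med ρ g + ((n : ℝ) + 1)⁻¹} := by
    intro i j hij y hy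
    simp only [mem_setOf_eq] at hy ⊢
    have hij' : (i : ℝ) ≤ j := by exact_mod_cast hij
    have hinv : ((j : ℝ) + 1)⁻¹ ≤ ((i : ℝ) + 1)⁻¹ := by
      apply inv_anti₀ <;> linarith
    linarith
  have ht := tendsto_measure_iInter_atTop (μ := ρ)
    (fun n => (measurableSet_le hg measurable_const).nullMeasurableSet) hanti
    ⟨0, measure_ne_top ρ _⟩
  have hiI : {y | g y ≤ med ρ g} = ⋂ n : ℕ, {y | g y ≤ med ρ g + ((n : ℝ) + 1)⁻¹} := by
    ext y
    simp only [mem_iInter, mem_setOf_eq]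
    constructor
    · intro h n
      have : (0 : ℝ) < ((n : ℝ) + 1)⁻¹ := by positivity
      linarith
    · intro h
      by_contra hlt
      push_neg at hlt
      obtain ⟨n, hn⟩ := exists_nat_one_div_lt (sub_pos.mpr hlt)
      have := h n
      rw [one_div] at hn
      linarith
  rw [hiI]
  exact ge_of_tendsto ht (Eventually.of_forall hmem)

lemma measure_med_le (hg : Measurable g) : 2⁻¹ ≤ ρ {y | med ρ g ≤ g y} := by
  have hbd := medSet_bddBelow ρ hg
  have hlt : ρ {y | g y < med ρ g} ≤ 2⁻¹ := by
    have hU : {y | g y < med ρ g} = ⋃ n : ℕ, {y | g y ≤ med ρ g - ((n : ℝ) + 1)⁻¹} := by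
      ext y
      simp only [mem_iUnion, mem_setOf_eq]
      constructor
      · intro h
        obtain ⟨n, hn⟩ := exists_nat_one_div_lt (sub_pos.mpr h)
        rw [one_div] at hn
        exact ⟨n, by linarith⟩
      · rintro ⟨n, hn⟩
        have : (0 : ℝ) < ((n : ℝ) + 1)⁻¹ := by positivity
        linarith
    have hmono : Monotone fun n : ℕ => {y | g y ≤ med ρ g - ((n : ℝ) + 1)⁻¹} := by
      intro i j hij y hy
      simp only [mem_setOf_eq] at hy ⊢
      have hij' : (i : ℝ) ≤ j := by exact_mod_cast hij
      have hinv : ((j : ℝ) + 1)⁻¹ ≤ ((i : ℝ) + 1)⁻¹ := by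
        apply inv_anti₀ <;> linarith
      linarith
    have ht := tendsto_measure_iUnion_atTop (μ := ρ) hmono
    rw [← hU] at ht
    refine le_of_tendsto ht (Eventually.of_forall fun n => ?_)
    by_contra hgt
    push_neg at hgt
    have hmem : med ρ g - ((n : ℝ) + 1)⁻¹ ∈ medSet ρ g := hgt.le
    have := csInf_le hbd hmem
    have hpos : (0 : ℝ) < ((n : ℝ) + 1)⁻¹ := by positivity
    unfold med at this
    linarith
  calc (2 : ℝ≥0∞)⁻¹ = 1 - 2⁻¹ := ENNReal.one_sub_inv_two.symm
    _ ≤ 1 - ρ {y | g y < med ρ g} := tsub_le_tsub_left hlt 1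
    _ = ρ ({y | g y < med ρ g}ᶜ) :=
        (prob_compl_eq_one_sub (measurableSet_lt hg measurable_const)).symm
    _ = ρ {y | med ρ g ≤ g y} := by congr 1; ext y; simp [not_lt]

lemma med_le_med_add {g g' : α → ℝ} (hg : Measurable g) (hg' : Measurable g') {e : ℝ}
    (h : ∀ y, g' y ≤ g y + e) : med ρ g' ≤ med ρ g + e := by
  have key : ∀ t ∈ medSet ρ g, med ρ g' ≤ t + e := by
    intro t htS
    refine csInf_le (medSet_bddBelow ρ hg') ?_
    exact le_trans htS (measure_mono fun y hy => le_trans (h y) (by simp only [mem_setOf_eq] at hy ⊢; linarith))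
  have h2 : med ρ g' - e ≤ med ρ g :=
    le_csInf (medSet_nonempty ρ hg) fun t htS => by linarith [key t htS]
  linarith


/-! ### Facts about metric preserving functions -/

section FLemmas

variable {F : ℝ≥0 → ℝ≥0 → ℝ≥0}

lemma F_zero_zero (hF : IsMetricPreserving2 F) : F 0 0 = 0 := by
  have h := ((hF ℝ ℝ).1 ((0 : ℝ), (0 : ℝ)) ((0 : ℝ), (0 : ℝ))).mpr rfl
  simpa using h

private lemma nndist_eq_of_dist {X : Type*} [MetricSpace X] {x y : X} {t : ℝ≥0}
    (h : dist x y = (t : ℝ)) : nndist x y = t := by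
  have : ((nndist x y : ℝ≥0) : ℝ) = (t : ℝ) := by rw [coe_nndist]; exact h
  exact_mod_cast this

lemma F_double_right (hF : IsMetricPreserving2 F) {s t : ℝ≥0} (h : s ≤ 2 * t) :
    F 0 s ≤ 2 * F 0 t := by
  have hst : (s : ℝ) ≤ 2 * t := by exact_mod_cast h
  have hs0 : (0 : ℝ) ≤ (s : ℝ) := s.coe_nonneg
  have ht0 : (0 : ℝ) ≤ (t : ℝ) := t.coe_nonneg
  have htri := (hF ℝ (ℝ × ℝ)).2.2 ((0 : ℝ), ((0 : ℝ), (0 : ℝ)))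
    ((0 : ℝ), ((s : ℝ) / 2, (t : ℝ))) ((0 : ℝ), ((s : ℝ), (0 : ℝ)))
  simp only [nndist_self] at htri
  have e2 : nndist (((0 : ℝ), (0 : ℝ))) (((s : ℝ), (0 : ℝ))) = s := by
    refine nndist_eq_of_dist ?_
    rw [Prod.dist_eq]
    simp [Real.dist_eq, abs_of_nonneg hs0]
  have e3 : nndist (((0 : ℝ), (0 : ℝ))) (((s : ℝ) / 2, (t : ℝ))) = t := by
    refine nndist_eq_of_dist ?_
    rw [Prod.dist_eq]
    simp only [Real.dist_eq]
    rw [zero_sub, zero_sub, abs_neg, abs_neg, abs_of_nonneg (by linarith), abs_of_nonneg ht0]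
    exact max_eq_right (by linarith)
  have e4 : nndist (((s : ℝ) / 2, (t : ℝ))) (((s : ℝ), (0 : ℝ))) = t := by
    refine nndist_eq_of_dist ?_
    rw [Prod.dist_eq]
    simp only [Real.dist_eq, sub_zero]
    rw [abs_of_nonpos (by linarith), abs_of_nonneg ht0]
    have h5 : -((s : ℝ) / 2 - s) = s / 2 := by ring
    rw [h5]
    exact max_eq_right (by linarith)
  rw [e2, e3, e4] at htri
  calc F 0 s ≤ F 0 t + F 0 t := htri
    _ = 2 * F 0 t := (two_mul _).symm

lemma F_double_left (hF : IsMetricPreserving2 F) {s t : ℝ≥0} (h : s ≤ 2 * t) :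
    F s 0 ≤ 2 * F t 0 := by
  have hst : (s : ℝ) ≤ 2 * t := by exact_mod_cast h
  have hs0 : (0 : ℝ) ≤ (s : ℝ) := s.coe_nonneg
  have ht0 : (0 : ℝ) ≤ (t : ℝ) := t.coe_nonneg
  have htri := (hF (ℝ × ℝ) ℝ).2.2 ((((0 : ℝ), (0 : ℝ))), (0 : ℝ))
    (((((s : ℝ) / 2, (t : ℝ)))), (0 : ℝ)) (((((s : ℝ), (0 : ℝ)))), (0 : ℝ))
  simp only [nndist_self] at htri
  have e2 : nndist (((0 : ℝ), (0 : ℝ))) (((s : ℝ), (0 : ℝ))) = s := by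
    refine nndist_eq_of_dist ?_
    rw [Prod.dist_eq]
    simp [Real.dist_eq, abs_of_nonneg hs0]
  have e3 : nndist (((0 : ℝ), (0 : ℝ))) (((s : ℝ) / 2, (t : ℝ))) = t := by
    refine nndist_eq_of_dist ?_
    rw [Prod.dist_eq]
    simp only [Real.dist_eq]
    rw [zero_sub, zero_sub, abs_neg, abs_neg, abs_of_nonneg (by linarith), abs_of_nonneg ht0]
    exact max_eq_right (by linarith)
  have e4 : nndist (((s : ℝ) / 2, (t : ℝ))) (((s : ℝ), (0 : ℝ))) = t := by
    refine nndist_eq_of_dist ?_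
    rw [Prod.dist_eq]
    simp only [Real.dist_eq, sub_zero]
    rw [abs_of_nonpos (by linarith), abs_of_nonneg ht0]
    have h5 : -((s : ℝ) / 2 - s) = s / 2 := by ring
    rw [h5]
    exact max_eq_right (by linarith)
  rw [e2, e3, e4] at htri
  calc F s 0 ≤ F t 0 + F t 0 := htri
    _ = 2 * F t 0 := (two_mul _).symm

end FLemmas

/-! ### Small real/metric helpers -/

lemma abs_min_sub_min (a b r : ℝ) : |min a r - min b r| ≤ |a - b| := by
  rcases abs_cases (a - b) with ⟨hab1, hab2⟩ | ⟨hab1, hab2⟩ <;>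
    rcases le_total a r with h1 | h1 <;> rcases le_total b r with h2 | h2 <;>
      simp only [min_eq_left h1, min_eq_right h1, min_eq_left h2, min_eq_right h2] <;>
        rw [abs_le] <;> constructor <;> linarith

lemma le_infDist_of {α : Type*} [MetricSpace α] {M : Set α} (hM : M.Nonempty) {y : α} {r : ℝ}
    (h : ∀ z ∈ M, r ≤ dist y z) : r ≤ Metric.infDist y M := by
  rcases le_or_gt r 0 with h0 | h0
  · exact le_trans h0 Metric.infDist_nonneg
  · have hE : ENNReal.ofReal r ≤ EMetric.infEdist y M :=
      EMetric.le_infEdist.mpr fun z hz => by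
        rw [edist_dist]; exact ENNReal.ofReal_le_ofReal (h z hz)
    calc r = (ENNReal.ofReal r).toReal := (ENNReal.toReal_ofReal h0.le).symm
      _ ≤ (EMetric.infEdist y M).toReal :=
          ENNReal.toReal_mono (Metric.infEdist_ne_top hM) hE
      _ = Metric.infDist y M := rfl

/-! ### The one-sided tail bound -/

lemma tail_bound {α : Type*} [MetricSpace α] {mα : MeasurableSpace α} [BorelSpace α]
    (ρ : Measure α) [IsProbabilityMeasure ρ]
    (φ : ℝ≥0 → ℝ≥0) (hφ : ∀ s t : ℝ≥0, s ≤ 2 * t → φ s ≤ 2 * φ t)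
    {κ₀ : ℝ} (hκ₀ : 0 < κ₀) (hκh : κ₀ < 2⁻¹)
    {β : ℝ≥0} (hβ : 0 < β) (hobs : obsDiamD dist ρ κ₀ < (β : ℝ≥0∞))
    {g : α → ℝ} (hg : Measurable g) (hLip : ∀ y y', |g y - g y'| ≤ (φ (nndist y y') : ℝ))
    {m : ℝ} (hm : 2⁻¹ ≤ ρ {y | g y ≤ m}) :
    ρ {y | m + 2 * (φ β : ℝ) < g y} ≤ ENNReal.ofReal κ₀ := by
  by_contra hB
  push_neg at hB
  set c : ℝ := (φ β : ℝ) with hc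
  set M : Set α := {y | g y ≤ m} with hMdef
  set B : Set α := {y | m + 2 * c < g y} with hBdef
  have hβR : (0 : ℝ) < (β : ℝ) := hβ
  have hMne : M.Nonempty := by
    refine nonempty_of_measure_ne_zero (μ := ρ) (fun h0 => ?_)
    rw [h0] at hm
    simp at hm
  -- separation between B and M
  have hsep : ∀ y' ∈ B, ∀ z ∈ M, 2 * (β : ℝ) ≤ dist y' z := by
    intro y' hy' z hz
    by_contra hlt
    push_neg at hlt
    have hnn : nndist y' z ≤ 2 * β := by
      rw [← NNReal.coe_le_coe]
      push_cast [coe_nndist]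
      exact hlt.le
    have h1 : (φ (nndist y' z) : ℝ) ≤ 2 * c := by
      have := hφ _ _ hnn
      rw [hc]
      exact_mod_cast this
    have h2 : 2 * c < g y' - g z := by
      have hz' : g z ≤ m := hz
      have hy'' : m + 2 * c < g y' := hy'
      linarith
    have h3 := hLip y' z
    have h4 := le_abs_self (g y' - g z)
    linarith
  have hMmeas : MeasurableSet M := measurableSet_le hg measurable_const
  -- the 1-Lipschitz witness function
  set r : ℝ := 2 * (β : ℝ) with hrdef
  set h : α → ℝ := fun y => min (Metric.infDist y M) r with hh
  have hhm : Measurable h :=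
    ((Metric.continuous_infDist_pt M).min continuous_const).measurable
  have hhlip : ∀ y y', |h y - h y'| ≤ dist y y' := by
    intro y y'
    refine le_trans (abs_min_sub_min _ _ _) ?_
    have l1 : Metric.infDist y M ≤ Metric.infDist y' M + dist y y' :=
      Metric.infDist_le_infDist_add_dist
    have l2 : Metric.infDist y' M ≤ Metric.infDist y M + dist y' y :=
      Metric.infDist_le_infDist_add_dist
    rw [dist_comm y' y] at l2
    rw [abs_le]
    constructor <;> linarith
  -- extract a small set T of large measure
  have hpd : partialDiamD (fun a b : ℝ => dist a b) (ρ.map h) (1 - κ₀) < (β : ℝ≥0∞) :=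
    lt_of_le_of_lt (partialDiamD_le_obsDiamD dist ρ κ₀ ⟨hhm, hhlip⟩) hobs
  unfold partialDiamD at hpd
  obtain ⟨T, hT⟩ := iInf_lt_iff.mp hpd
  obtain ⟨hTP, hTd⟩ := iInf_lt_iff.mp hT
  have hmapT : (ρ.map h) T = ρ (h ⁻¹' T) := Measure.map_apply hhm hTP.1
  have hT1 : ENNReal.ofReal (1 - κ₀) ≤ ρ (h ⁻¹' T) := hmapT ▸ hTP.2
  have hhalf_lt : (2 : ℝ≥0∞)⁻¹ < ENNReal.ofReal (1 - κ₀) := by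
    have : ((2 : ℝ≥0∞))⁻¹ = ENNReal.ofReal 2⁻¹ := by
      rw [ENNReal.ofReal_inv_of_pos (by norm_num)]
      norm_num
    rw [this]
    exact (ENNReal.ofReal_lt_ofReal_iff (by linarith)).mpr (by linarith)
  -- 0 ∈ T
  have h0mem : (0 : ℝ) ∈ T := by
    have hpos : ρ (h ⁻¹' T ∩ M) ≠ 0 := by
      intro h0
      have hui := measure_union_add_inter (μ := ρ) (h ⁻¹' T) hMmeas
      rw [h0, add_zero] at hui
      have hle : ρ (h ⁻¹' T) + ρ M ≤ 1 := by
        rw [← hui]; exact prob_le_one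
      have hgt : (1 : ℝ≥0∞) < ρ (h ⁻¹' T) + ρ M := by
        calc (1 : ℝ≥0∞) = 2⁻¹ + 2⁻¹ := ENNReal.inv_two_add_inv_two.symm
          _ < ENNReal.ofReal (1 - κ₀) + 2⁻¹ :=
              ENNReal.add_lt_add_right (by norm_num) hhalf_lt
          _ ≤ ρ (h ⁻¹' T) + ρ M := add_le_add hT1 hm
      exact absurd hle (not_le.mpr hgt)
    obtain ⟨y₀, hy₀T, hy₀M⟩ := nonempty_of_measure_ne_zero hpos
    have he : h y₀ = 0 := by
      rw [hh]
      simp only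
      rw [Metric.infDist_zero_of_mem hy₀M]
      exact min_eq_left (by positivity)
    have : h y₀ ∈ T := hy₀T
    rwa [he] at this
  -- r ∈ T
  have hrmem : r ∈ T := by
    have hpos : ρ (h ⁻¹' T ∩ B) ≠ 0 := by
      intro h0
      have hBmeas : MeasurableSet B := measurableSet_lt measurable_const hg
      have hui := measure_union_add_inter (μ := ρ) (h ⁻¹' T) hBmeas
      rw [h0, add_zero] at hui
      have hle : ρ (h ⁻¹' T) + ρ B ≤ 1 := by
        rw [← hui]; exact prob_le_one
      have hgt : (1 : ℝ≥0∞) < ρ (h ⁻¹' T) + ρ B := by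
        have hsum : ENNReal.ofReal (1 - κ₀) + ENNReal.ofReal κ₀ = 1 := by
          rw [← ENNReal.ofReal_add (by linarith) hκ₀.le]
          norm_num
        calc (1 : ℝ≥0∞) = ENNReal.ofReal (1 - κ₀) + ENNReal.ofReal κ₀ := hsum.symm
          _ < ρ (h ⁻¹' T) + ρ B :=
              ENNReal.add_lt_add_of_le_of_lt (by finiteness) hT1 hB
      exact absurd hle (not_le.mpr hgt)
    obtain ⟨y₁, hy₁T, hy₁B⟩ := nonempty_of_measure_ne_zero hpos
    have hr : r ≤ Metric.infDist y₁ M :=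
      le_infDist_of hMne fun z hz => hsep y₁ hy₁B z hz
    have he : h y₁ = r := by
      rw [hh]
      simp only
      exact min_eq_right hr
    have : h y₁ ∈ T := hy₁T
    rwa [he] at this
  -- contradiction
  have hge : (↑(2 * β) : ℝ≥0∞) ≤ diamD (fun a b : ℝ => dist a b) T := by
    have hd := le_diamD (fun a b : ℝ => dist a b) h0mem hrmem
    have : ENNReal.ofReal (dist (0 : ℝ) r) = (↑(2 * β) : ℝ≥0∞) := by
      rw [Real.dist_eq, zero_sub, abs_neg, abs_of_nonneg (by positivity), hrdef,
        show (2 : ℝ) * (β : ℝ) = ((2 * β : ℝ≥0) : ℝ) by push_cast; ring,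
        ENNReal.ofReal_coe_nnreal]
    rwa [this] at hd
  have hcoe : (β : ℝ≥0∞) ≤ (↑(2 * β) : ℝ≥0∞) := by
    rw [ENNReal.coe_le_coe]
    calc β = 1 * β := (one_mul β).symm
      _ ≤ 2 * β := mul_le_mul_left (by norm_num) β
  exact absurd (lt_of_le_of_lt (le_trans hcoe hge) hTd) (lt_irrefl _)

/-! ### Finiteness of the observable diameter -/

lemma obsDiamD_lt_top {α : Type*} [MetricSpace α] {mα : MeasurableSpace α}
    (ρ : Measure α) [IsProbabilityMeasure ρ] {κ₀ : ℝ} (hκ₀ : 0 < κ₀) :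
    obsDiamD dist ρ κ₀ < ∞ := by
  have hne : Nonempty α := by
    by_contra hemp
    rw [not_nonempty_iff] at hemp
    have h0 : ρ univ = 0 := by
      rw [Set.univ_eq_empty_iff.mpr hemp]
      exact measure_empty
    rw [measure_univ] at h0
    exact one_ne_zero h0
  obtain ⟨x₀⟩ := hne
  have hmono : Monotone fun n : ℕ => Metric.closedBall x₀ (n : ℝ) := fun i j hij =>
    Metric.closedBall_subset_closedBall (by exact_mod_cast hij)
  have ht := tendsto_measure_iUnion_atTop (μ := ρ) hmono
  have hU : (⋃ n : ℕ, Metric.closedBall x₀ (n : ℝ)) = univ := by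
    ext y
    simp only [mem_iUnion, Metric.mem_closedBall, mem_univ, iff_true]
    exact exists_nat_ge (dist y x₀)
  rw [hU, measure_univ] at ht
  have hlt1 : ENNReal.ofReal (1 - κ₀) < 1 := ENNReal.ofReal_lt_one.mpr (by linarith)
  obtain ⟨n, hn⟩ := (ht.eventually (eventually_gt_nhds hlt1)).exists
  refine lt_of_le_of_lt (?_ : _ ≤ ENNReal.ofReal (2 * (n : ℝ))) ENNReal.ofReal_lt_top
  unfold obsDiamD
  refine iSup_le fun f => iSup_le fun hf => ?_
  refine le_trans (partialDiamD_le_diamD _ _ _ measurableSet_Icc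
    (A := Set.Icc (f x₀ - n) (f x₀ + n)) ?_) ?_
  · rw [Measure.map_apply hf.1 measurableSet_Icc]
    refine le_trans hn.le (measure_mono fun y hy => ?_)
    have hd := hf.2 y x₀
    have hb : dist y x₀ ≤ (n : ℝ) := hy
    rcases abs_le.mp hd with ⟨hd1, hd2⟩
    exact ⟨by linarith, by linarith⟩
  · refine le_trans (diamD_Icc_le _ _) (ENNReal.ofReal_le_ofReal (by linarith))


/-! ### The main per-function bound -/

lemma per_f {X Y : Type} [MetricSpace X] [MeasurableSpace X] [BorelSpace X]
    [MetricSpace Y] [MeasurableSpace Y] [BorelSpace Y]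
    (μ : Measure X) [IsProbabilityMeasure μ] (ν : Measure Y) [IsProbabilityMeasure ν]
    {F : ℝ≥0 → ℝ≥0 → ℝ≥0} (hF : IsMetricPreserving2 F)
    (hFc : Continuous fun p : ℝ≥0 × ℝ≥0 => F p.1 p.2)
    {κ κ' : ℝ} (hκ : 0 < κ) (hκh : κ < 2⁻¹) (hκ' : 0 < κ') (hκ'h : κ' < 2⁻¹)
    {αn βn : ℝ≥0} (hαp : 0 < αn) (hβp : 0 < βn)
    (hαo : obsDiamD dist μ κ < (αn : ℝ≥0∞)) (hβo : obsDiamD dist ν κ' < (βn : ℝ≥0∞))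
    {f : X × Y → ℝ} (hfm : Measurable f)
    (hfl : ∀ p q : X × Y, |f p - f q| ≤ (F (nndist p.1 q.1) (nndist p.2 q.2) : ℝ)) :
    partialDiamD (fun a b : ℝ => dist a b) ((μ.prod ν).map f) (1 - 2 * (κ + κ')) ≤
      ENNReal.ofReal (4 * (F αn 0 : ℝ) + 4 * (F 0 βn : ℝ)) := by
  have hsec : ∀ x : X, Measurable fun y => f (x, y) := fun x =>
    hfm.comp measurable_prodMk_left
  set c₁ : ℝ := (F αn 0 : ℝ) with hc₁
  set c₂ : ℝ := (F 0 βn : ℝ) with hc₂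
  have hc₁0 : 0 ≤ c₁ := (F αn 0).coe_nonneg
  have hc₂0 : 0 ≤ c₂ := (F 0 βn).coe_nonneg
  set m : X → ℝ := fun x => med ν fun y => f (x, y) with hmdef
  -- Lipschitz property of sections in y
  have hsecLip : ∀ (x : X) (y y' : Y), |f (x, y) - f (x, y')| ≤ (F 0 (nndist y y') : ℝ) := by
    intro x y y'
    have := hfl (x, y) (x, y')
    simpa [nndist_self] using this
  -- inner (Y-direction) tail bounds
  have hup : ∀ x : X, ν {y | m x + 2 * c₂ < f (x, y)} ≤ ENNReal.ofReal κ' := by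
    intro x
    exact tail_bound ν (fun u => F 0 u) (fun u v huv => F_double_right hF huv)
      hκ' hκ'h hβp hβo (hsec x) (hsecLip x) (measure_le_med ν (hsec x))
  have hlo : ∀ x : X, ν {y | f (x, y) < m x - 2 * c₂} ≤ ENNReal.ofReal κ' := by
    intro x
    have hmge := measure_med_le ν (hsec x)
    have hmneg : 2⁻¹ ≤ ν {y | -f (x, y) ≤ -(m x)} := by
      have : {y | -f (x, y) ≤ -(m x)} = {y | m x ≤ f (x, y)} := by
        ext y; simp only [mem_setOf_eq, neg_le_neg_iff]
      rw [this]
      exact hmge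
    have hneg := tail_bound ν (fun u => F 0 u) (fun u v huv => F_double_right hF huv)
      hκ' hκ'h hβp hβo (hsec x).neg
      (fun y y' => by
        have he : -f (x, y) - -f (x, y') = -(f (x, y) - f (x, y')) := by ring
        simp only [Pi.neg_apply]
        rw [he, abs_neg]
        exact hsecLip x y y') hmneg
    have hset : {y | -(m x) + 2 * (((fun u => F 0 u) βn : ℝ≥0) : ℝ) < -f (x, y)} =
        {y | f (x, y) < m x - 2 * c₂} := by
      ext y
      simp only [mem_setOf_eq]
      constructor <;> intro hy <;> [linarith; linarith]
    simp only [Pi.neg_apply] at hneg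
    rw [← hset]; exact hneg
  -- Lipschitz property of the median function m
  have hmLip : ∀ x x' : X, |m x - m x'| ≤ (F (nndist x x') 0 : ℝ) := by
    intro x x'
    have hfx : ∀ y : Y, |f (x, y) - f (x', y)| ≤ (F (nndist x x') 0 : ℝ) := by
      intro y
      have := hfl (x, y) (x', y)
      simpa [nndist_self] using this
    have h1 : m x ≤ m x' + (F (nndist x x') 0 : ℝ) := by
      refine med_le_med_add ν (hsec x') (hsec x) fun y => ?_
      have := abs_le.mp (hfx y)
      linarith [this.1, this.2]
    have h2 : m x' ≤ m x + (F (nndist x x') 0 : ℝ) := by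
      refine med_le_med_add ν (hsec x) (hsec x') fun y => ?_
      have := abs_le.mp (hfx y)
      linarith [this.1, this.2]
    exact abs_le.mpr ⟨by linarith, by linarith⟩
  -- continuity (hence measurability) of m
  have hmCont : Continuous m := by
    have hF1 : Continuous fun u : ℝ≥0 => F u 0 :=
      hFc.comp (continuous_id.prodMk continuous_const)
    refine continuous_iff_continuousAt.mpr fun x₀ => ?_
    rw [ContinuousAt, tendsto_iff_dist_tendsto_zero]
    have hnd : Tendsto (fun x : X => nndist x x₀) (𝓝 x₀) (𝓝 0) := by
      have hc : Continuous fun x : X => nndist x x₀ :=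
        continuous_id.nndist continuous_const
      have := hc.tendsto x₀
      rwa [nndist_self] at this
    have h2 := (hF1.tendsto 0).comp hnd
    rw [F_zero_zero hF] at h2
    have h3 : Tendsto (fun x : X => (F (nndist x x₀) 0 : ℝ)) (𝓝 x₀) (𝓝 (0 : ℝ)) := by
      have := (NNReal.tendsto_coe (f := 𝓝 x₀)).mpr h2
      simpa using this
    refine squeeze_zero (fun x => dist_nonneg) (fun x => ?_) h3
    rw [Real.dist_eq]
    exact hmLip x x₀
  have hmMeas : Measurable m := hmCont.measurable
  set mm : ℝ := med μ m with hmm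
  -- outer (X-direction) tail bounds
  have hupX : μ {x | mm + 2 * c₁ < m x} ≤ ENNReal.ofReal κ := by
    exact tail_bound μ (fun u => F u 0) (fun u v huv => F_double_left hF huv)
      hκ hκh hαp hαo hmMeas (fun x x' => hmLip x x') (measure_le_med μ hmMeas)
  have hloX : μ {x | m x < mm - 2 * c₁} ≤ ENNReal.ofReal κ := by
    have hmge := measure_med_le μ hmMeas
    have hmneg : 2⁻¹ ≤ μ {x | -m x ≤ -mm} := by
      have : {x | -m x ≤ -mm} = {x | mm ≤ m x} := by
        ext x; simp only [mem_setOf_eq, neg_le_neg_iff]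
      rw [this]
      exact hmge
    have hneg := tail_bound μ (fun u => F u 0) (fun u v huv => F_double_left hF huv)
      hκ hκh hαp hαo hmMeas.neg
      (fun x x' => by
        have he : -m x - -m x' = -(m x - m x') := by ring
        simp only [Pi.neg_apply]
        rw [he, abs_neg]
        exact hmLip x x') hmneg
    have hset : {x | -mm + 2 * (((fun u => F u 0) αn : ℝ≥0) : ℝ) < -m x} =
        {x | m x < mm - 2 * c₁} := by
      ext x
      simp only [mem_setOf_eq]
      constructor <;> intro hx <;> [linarith; linarith]
    simp only [Pi.neg_apply] at hneg
    rw [← hset]; exact hneg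
  -- the good set G of x's
  set G : Set X := {x | mm - 2 * c₁ ≤ m x ∧ m x ≤ mm + 2 * c₁} with hGdef
  have hGmeas : MeasurableSet G := by
    rw [hGdef, Set.setOf_and]
    exact (measurableSet_le measurable_const hmMeas).inter
      (measurableSet_le hmMeas measurable_const)
  have hGc : μ Gᶜ ≤ ENNReal.ofReal κ + ENNReal.ofReal κ := by
    have hsub : Gᶜ ⊆ {x | m x < mm - 2 * c₁} ∪ {x | mm + 2 * c₁ < m x} := by
      intro x hx
      simp only [hGdef, mem_compl_iff, mem_setOf_eq, not_and_or, not_le] at hx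
      simp only [mem_union, mem_setOf_eq]
      exact hx
    exact le_trans (measure_mono hsub)
      (le_trans (measure_union_le _ _) (add_le_add hloX hupX))
  have hG : ENNReal.ofReal (1 - 2 * κ) ≤ μ G := by
    have h1 : μ G = 1 - μ Gᶜ := by
      rw [← prob_compl_eq_one_sub hGmeas.compl, compl_compl]
    rw [h1]
    calc ENNReal.ofReal (1 - 2 * κ) = 1 - ENNReal.ofReal (2 * κ) := by
          rw [ENNReal.ofReal_sub _ (by positivity), ENNReal.ofReal_one]
      _ ≤ 1 - μ Gᶜ := by
          refine tsub_le_tsub_left (le_trans hGc ?_) 1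
          rw [← ENNReal.ofReal_add hκ.le hκ.le]
          exact ENNReal.ofReal_le_ofReal (by linarith)
  -- interval S
  set lo : ℝ := mm - (2 * c₁ + 2 * c₂) with hlodef
  set hi : ℝ := mm + (2 * c₁ + 2 * c₂) with hhidef
  -- inner measure bound for x ∈ G
  have hin : ∀ x ∈ G, ENNReal.ofReal (1 - 2 * κ') ≤ ν {y | f (x, y) ∈ Set.Icc lo hi} := by
    intro x hx
    have hxG : mm - 2 * c₁ ≤ m x ∧ m x ≤ mm + 2 * c₁ := hx
    have hAmeas : MeasurableSet {y | f (x, y) ∈ Set.Icc lo hi} := (hsec x) measurableSet_Icc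
    have hsub : {y | f (x, y) ∈ Set.Icc lo hi}ᶜ ⊆
        {y | f (x, y) < m x - 2 * c₂} ∪ {y | m x + 2 * c₂ < f (x, y)} := by
      intro y hy
      simp only [mem_compl_iff, mem_setOf_eq, Set.mem_Icc, not_and_or, not_le] at hy
      simp only [mem_union, mem_setOf_eq]
      rcases hy with h | h
      · left; rw [hlodef] at h; linarith [hxG.1]
      · right; rw [hhidef] at h; linarith [hxG.2]
    have hcompl : ν ({y | f (x, y) ∈ Set.Icc lo hi}ᶜ) ≤ ENNReal.ofReal (2 * κ') := by
      refine le_trans (measure_mono hsub) (le_trans (measure_union_le _ _) ?_)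
      refine le_trans (add_le_add (hlo x) (hup x)) ?_
      rw [← ENNReal.ofReal_add hκ'.le hκ'.le]
      exact ENNReal.ofReal_le_ofReal (by linarith)
    have h1 : ν {y | f (x, y) ∈ Set.Icc lo hi} = 1 - ν ({y | f (x, y) ∈ Set.Icc lo hi}ᶜ) := by
      rw [← prob_compl_eq_one_sub hAmeas.compl, compl_compl]
    rw [h1]
    calc ENNReal.ofReal (1 - 2 * κ') = 1 - ENNReal.ofReal (2 * κ') := by
          rw [ENNReal.ofReal_sub _ (by positivity), ENNReal.ofReal_one]
      _ ≤ 1 - ν ({y | f (x, y) ∈ Set.Icc lo hi}ᶜ) := tsub_le_tsub_left hcompl 1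
  -- Fubini
  have hfS : MeasurableSet (f ⁻¹' Set.Icc lo hi) := hfm measurableSet_Icc
  have hkey : ENNReal.ofReal (1 - 2 * (κ + κ')) ≤ (μ.prod ν) (f ⁻¹' Set.Icc lo hi) := by
    rw [Measure.prod_apply hfS]
    have hmono : ∀ x : X, G.indicator (fun _ => ENNReal.ofReal (1 - 2 * κ')) x ≤
        ν (Prod.mk x ⁻¹' (f ⁻¹' Set.Icc lo hi)) := by
      intro x
      by_cases hx : x ∈ G
      · rw [Set.indicator_of_mem hx]
        exact hin x hx
      · rw [Set.indicator_of_notMem hx]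
        exact zero_le
    calc ENNReal.ofReal (1 - 2 * (κ + κ'))
        ≤ ENNReal.ofReal ((1 - 2 * κ') * (1 - 2 * κ)) := by
          refine ENNReal.ofReal_le_ofReal ?_
          nlinarith [mul_pos hκ hκ']
      _ = ENNReal.ofReal (1 - 2 * κ') * ENNReal.ofReal (1 - 2 * κ) :=
          ENNReal.ofReal_mul (by linarith)
      _ ≤ ENNReal.ofReal (1 - 2 * κ') * μ G := mul_le_mul_right hG _
      _ = ∫⁻ x, G.indicator (fun _ => ENNReal.ofReal (1 - 2 * κ')) x ∂μ :=
          (lintegral_indicator_const hGmeas _).symm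
      _ ≤ ∫⁻ x, ν (Prod.mk x ⁻¹' (f ⁻¹' Set.Icc lo hi)) ∂μ := lintegral_mono hmono
  -- conclusion
  refine le_trans (partialDiamD_le_diamD _ _ _ (A := Set.Icc lo hi) measurableSet_Icc ?_) ?_
  · rw [Measure.map_apply hfm measurableSet_Icc]
    exact hkey
  · refine le_trans (diamD_Icc_le lo hi) (ENNReal.ofReal_le_ofReal ?_)
    rw [hhidef, hlodef]
    linarith

end ObsDiamAux
end AuxObsDiam


/-- For mm-spaces `X`, `Y` and a continuous metric preserving `F` on
`[0,∞)²`, `ObsDiam(X ×_F Y; -2(κ+κ')) ≤ 4 F(ObsDiam(X; -κ), 0) + 8 F(0, ObsDiam(Y; -κ'))`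
for `κ ∈ (0,1)`, `κ' ∈ (0,1/4)`. -/
theorem obsDiam_F_prod (X Y : Type)
    [MetricSpace X] [MeasurableSpace X] [BorelSpace X] [SeparableSpace X] [CompleteSpace X]
    [MetricSpace Y] [MeasurableSpace Y] [BorelSpace Y] [SeparableSpace Y] [CompleteSpace Y]
    (μ : Measure X) [IsProbabilityMeasure μ] (ν : Measure Y) [IsProbabilityMeasure ν]
    (F : ℝ≥0 → ℝ≥0 → ℝ≥0) (hF : IsMetricPreserving2 F)
    (hFc : Continuous fun p : ℝ≥0 × ℝ≥0 => F p.1 p.2)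
    (κ κ' : ℝ) (hκ : κ ∈ Set.Ioo (0 : ℝ) 1) (hκ' : κ' ∈ Set.Ioo (0 : ℝ) (1 / 4)) :
    obsDiamD (fun a b : X × Y => (F (nndist a.1 b.1) (nndist a.2 b.2) : ℝ))
        (μ.prod ν) (2 * (κ + κ')) ≤
      4 * (F (obsDiamD dist μ κ).toNNReal 0 : ℝ≥0∞) +
        8 * (F 0 (obsDiamD dist ν κ').toNNReal : ℝ≥0∞) := by
  classical
  open ObsDiamAux in
  rcases le_or_gt 1 (2 * (κ + κ')) with htriv | hmain
  · -- trivial case: the partial diameter threshold is nonpositive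
    refine le_trans ?_ (zero_le)
    unfold obsDiamD
    refine iSup_le fun f => iSup_le fun hf => ?_
    refine le_trans (ObsDiamAux.partialDiamD_le_diamD _ _ _
      (A := (∅ : Set ℝ)) MeasurableSet.empty ?_) ?_
    · rw [ENNReal.ofReal_eq_zero.mpr (by linarith)]
      exact zero_le
    · unfold diamD
      simp
  · -- main case
    have hκh : κ < 2⁻¹ := by linarith [hκ'.1]
    have hκ'h : κ' < 2⁻¹ := by linarith [hκ.1]
    have hDX := ObsDiamAux.obsDiamD_lt_top μ hκ.1
    have hDY := ObsDiamAux.obsDiamD_lt_top ν hκ'.1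
    set a : ℝ≥0 := (obsDiamD dist μ κ).toNNReal with ha
    set b : ℝ≥0 := (obsDiamD dist ν κ').toNNReal with hb
    have hDXa : obsDiamD dist μ κ = (a : ℝ≥0∞) := (ENNReal.coe_toNNReal hDX.ne).symm
    have hDYb : obsDiamD dist ν κ' = (b : ℝ≥0∞) := (ENNReal.coe_toNNReal hDY.ne).symm
    have key : ∀ ε : ℝ≥0, 0 < ε →
        obsDiamD (fun p q : X × Y => (F (nndist p.1 q.1) (nndist p.2 q.2) : ℝ))
            (μ.prod ν) (2 * (κ + κ')) ≤
          4 * ((F (a + ε) 0 : ℝ≥0) : ℝ≥0∞) + 8 * ((F 0 (b + ε) : ℝ≥0) : ℝ≥0∞) := by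
      intro ε hε
      have hαo : obsDiamD dist μ κ < ((a + ε : ℝ≥0) : ℝ≥0∞) := by
        rw [hDXa]
        exact_mod_cast lt_add_of_pos_right a hε
      have hβo : obsDiamD dist ν κ' < ((b + ε : ℝ≥0) : ℝ≥0∞) := by
        rw [hDYb]
        exact_mod_cast lt_add_of_pos_right b hε
      unfold obsDiamD
      refine iSup_le fun f => iSup_le fun hf => ?_
      have hper := ObsDiamAux.per_f μ ν hF hFc hκ.1 hκh hκ'.1 hκ'h
        (by positivity) (by positivity) hαo hβo hf.1 hf.2
      refine le_trans hper ?_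
      rw [ENNReal.ofReal_add (by positivity) (by positivity)]
      have e1 : ENNReal.ofReal (4 * ((F (a + ε) 0 : ℝ≥0) : ℝ)) =
          4 * ((F (a + ε) 0 : ℝ≥0) : ℝ≥0∞) := by
        rw [ENNReal.ofReal_mul (by norm_num), ENNReal.ofReal_coe_nnreal, ENNReal.ofReal_ofNat]
      have e2 : ENNReal.ofReal (4 * ((F 0 (b + ε) : ℝ≥0) : ℝ)) =
          4 * ((F 0 (b + ε) : ℝ≥0) : ℝ≥0∞) := by
        rw [ENNReal.ofReal_mul (by norm_num), ENNReal.ofReal_coe_nnreal, ENNReal.ofReal_ofNat]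
      rw [e1, e2]
      refine add_le_add le_rfl ?_
      exact mul_le_mul_left (by norm_num) _
    -- pass to the limit ε → 0⁺ using continuity of F
    have hc1 : Continuous fun ε : ℝ≥0 =>
        4 * ((F (a + ε) 0 : ℝ≥0) : ℝ≥0∞) + 8 * ((F 0 (b + ε) : ℝ≥0) : ℝ≥0∞) := by
      have hA : Continuous fun ε : ℝ≥0 => F (a + ε) 0 :=
        hFc.comp ((continuous_const.add continuous_id).prodMk continuous_const)
      have hB : Continuous fun ε : ℝ≥0 => F 0 (b + ε) :=
        hFc.comp (continuous_const.prodMk (continuous_const.add continuous_id))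
      have hA' : Continuous fun ε : ℝ≥0 => ((F (a + ε) 0 : ℝ≥0) : ℝ≥0∞) :=
        ENNReal.continuous_coe.comp hA
      have hB' : Continuous fun ε : ℝ≥0 => ((F 0 (b + ε) : ℝ≥0) : ℝ≥0∞) :=
        ENNReal.continuous_coe.comp hB
      exact ((ENNReal.continuous_const_mul (by norm_num)).comp hA').add
        ((ENNReal.continuous_const_mul (by norm_num)).comp hB')
    have htend : Tendsto (fun ε : ℝ≥0 =>
        4 * ((F (a + ε) 0 : ℝ≥0) : ℝ≥0∞) + 8 * ((F 0 (b + ε) : ℝ≥0) : ℝ≥0∞))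
        (𝓝[>] (0 : ℝ≥0))
        (𝓝 (4 * ((F a 0 : ℝ≥0) : ℝ≥0∞) + 8 * ((F 0 b : ℝ≥0) : ℝ≥0∞))) := by
      have := (hc1.tendsto 0).mono_left (nhdsWithin_le_nhds (s := Set.Ioi (0 : ℝ≥0)))
      simpa using this
    exact ge_of_tendsto htend
      (eventually_nhdsWithin_of_forall fun ε hε => key ε hε)
end

section
/- Let X and Y be two metric spaces and let F : [0,∞)² → [0,∞) be a continuous metric preserving function that is an isotone. Then for any nonempty subsets A, A' ⊆ X and nonempty subsets B, B' ⊆ Y, d_F(A × B, A' × B') = F(d_X(A, A'), d_Y(B, B')), where for subsets S, S' of a metric space, d(S, S') := inf { d(s, s') : s ∈ S, s' ∈ S' }, and d_F((x,y),(x',y')) := F(d_X(x,x'), d_Y(y,y')). -/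
open MeasureTheory Filter Topology NNReal ENNReal TopologicalSpace

/-- For metric spaces `X`, `Y`, a continuous metric preserving isotone `F`
on `[0,∞)²` and nonempty subsets `A, A' ⊆ X`, `B, B' ⊆ Y`,
`d_F(A × B, A' × B') = F(d_X(A, A'), d_Y(B, B'))`. -/
theorem setDist_prod_isotone (X Y : Type) [MetricSpace X] [MetricSpace Y]
    (F : ℝ≥0 → ℝ≥0 → ℝ≥0) (hF : IsMetricPreserving2 F)
    (hFc : Continuous fun p : ℝ≥0 × ℝ≥0 => F p.1 p.2)
    (hiso : ∀ s s' t t' : ℝ≥0, s ≤ s' → t ≤ t' → F s t ≤ F s' t')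
    (A A' : Set X) (B B' : Set Y)
    (hA : A.Nonempty) (hA' : A'.Nonempty) (hB : B.Nonempty) (hB' : B'.Nonempty) :
    setDistD (fun p q : X × Y => (F (nndist p.1 q.1) (nndist p.2 q.2) : ℝ))
        (A ×ˢ B) (A' ×ˢ B') =
      (F (setDistD dist A A').toNNReal (setDistD dist B B').toNNReal : ℝ) := by
  classical
  set sA := setDistD dist A A' with hsAdef
  set sB := setDistD dist B B' with hsBdef
  have hbddA : BddBelow (Set.image2 dist A A') := by
    refine ⟨0, fun x hx => ?_⟩
    obtain ⟨a, ha, a', ha', rfl⟩ := hx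
    exact dist_nonneg
  have hbddB : BddBelow (Set.image2 dist B B') := by
    refine ⟨0, fun x hx => ?_⟩
    obtain ⟨b, hb, b', hb', rfl⟩ := hx
    exact dist_nonneg
  have hneA : (Set.image2 dist A A').Nonempty := Set.Nonempty.image2 hA hA'
  have hneB : (Set.image2 dist B B').Nonempty := Set.Nonempty.image2 hB hB'
  have hsA0 : 0 ≤ sA := le_csInf hneA (by rintro x ⟨a, ha, a', ha', rfl⟩; exact dist_nonneg)
  have hsB0 : 0 ≤ sB := le_csInf hneB (by rintro x ⟨b, hb, b', hb', rfl⟩; exact dist_nonneg)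
  have hleA : ∀ a ∈ A, ∀ a' ∈ A', sA ≤ dist a a' := fun a ha a' ha' =>
    csInf_le hbddA ⟨a, ha, a', ha', rfl⟩
  have hleB : ∀ b ∈ B, ∀ b' ∈ B', sB ≤ dist b b' := fun b hb b' hb' =>
    csInf_le hbddB ⟨b, hb, b', hb', rfl⟩
  set S := Set.image2 (fun p q : X × Y => (F (nndist p.1 q.1) (nndist p.2 q.2) : ℝ))
    (A ×ˢ B) (A' ×ˢ B') with hSdef
  have hSne : S.Nonempty := Set.Nonempty.image2 (hA.prod hB) (hA'.prod hB')
  have hSbdd : BddBelow S := by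
    refine ⟨0, fun x hx => ?_⟩
    obtain ⟨p, hp, q, hq, rfl⟩ := hx
    exact (F _ _).2
  rw [setDistD, ← hSdef]
  apply le_antisymm
  · rw [Real.sInf_le_iff hSbdd hSne]
    intro ε hε
    obtain ⟨δ, hδ, hδ'⟩ := Metric.continuousAt_iff.mp
      (hFc.continuousAt (x := (sA.toNNReal, sB.toNNReal))) ε hε
    obtain ⟨x, hx, hxlt⟩ := Real.lt_sInf_add_pos hneA hδ
    obtain ⟨a, ha, a', ha', rfl⟩ := hx
    obtain ⟨y, hy, hylt⟩ := Real.lt_sInf_add_pos hneB hδ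
    obtain ⟨b, hb, b', hb', rfl⟩ := hy
    have hxlt' : dist a a' < sA + δ := hxlt
    have hylt' : dist b b' < sB + δ := hylt
    refine ⟨F (nndist a a') (nndist b b'),
      ⟨(a, b), ⟨ha, hb⟩, (a', b'), ⟨ha', hb'⟩, rfl⟩, ?_⟩
    have hd : dist ((nndist a a', nndist b b') : ℝ≥0 × ℝ≥0) (sA.toNNReal, sB.toNNReal) < δ := by
      rw [Prod.dist_eq]
      apply max_lt
      · rw [NNReal.dist_eq]
        rw [abs_of_nonneg]
        · simp only [coe_nndist, Real.coe_toNNReal _ hsA0]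
          linarith [hxlt']
        · simp only [coe_nndist, Real.coe_toNNReal _ hsA0]
          linarith [hleA a ha a' ha']
      · rw [NNReal.dist_eq]
        rw [abs_of_nonneg]
        · simp only [coe_nndist, Real.coe_toNNReal _ hsB0]
          linarith [hylt']
        · simp only [coe_nndist, Real.coe_toNNReal _ hsB0]
          linarith [hleB b hb b' hb']
    have := hδ' hd
    rw [NNReal.dist_eq] at this
    have := abs_lt.mp this
    linarith [this.1, this.2]
  · apply le_csInf hSne
    rintro x ⟨p, hp, q, hq, rfl⟩
    simp only
    rw [NNReal.coe_le_coe]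
    refine hiso _ _ _ _ ?_ ?_
    · exact Real.toNNReal_le_iff_le_coe.mpr (by simpa using hleA p.1 hp.1 q.1 hq.1)
    · exact Real.toNNReal_le_iff_le_coe.mpr (by simpa using hleB p.2 hp.2 q.2 hq.2)
end
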